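/- Let 𝐢 = (i₁, …, i_N) be a reduced word for the longest element w₀ adapted to a Dynkin quiver Q of simply-laced type, and let 𝐢* := (i_N, …, i₁) be the reversed word. Then 𝐢* is a reduced word for w₀ adapted to the dual quiver Q*. -/

import Mathlib

open scoped BigOperators

namespace CLDual

noncomputable section

open scoped Classical

/-- The ambient field `ℂ(𝔱*)` of rational functions in the simple roots `α₁, …, αₙ`. -/
abbrev K (n : ℕ) := FractionRing (MvPolynomial (Fin n) ℂ)

/-- A root-lattice element (written in the basis of simple roots) viewed as a linear
form on the Cartan subalgebra, i.e. as an element of `K n`. -/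
def lin {n : ℕ} (γ : Fin n → ℤ) : K n :=
  algebraMap (MvPolynomial (Fin n) ℂ) (K n)
    (∑ i, (γ i : MvPolynomial (Fin n) ℂ) * MvPolynomial.X i)

/-- The twisted realization `ψ ∘ lin`, where `ψ(α_i) = α_{i*}`. -/
def linStar {n : ℕ} (st : Fin n → Fin n) (γ : Fin n → ℤ) : K n :=
  lin fun i => γ (st i)

/-- The scalars `ℂ` inside `K n`. -/
def cK {n : ℕ} (c : ℂ) : K n :=
  algebraMap (MvPolynomial (Fin n) ℂ) (K n) (MvPolynomial.C c)

/-- The scalars `ℂ` inside `K n`, as a ring homomorphism. -/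
def cKHom (n : ℕ) : ℂ →+* K n :=
  (algebraMap (MvPolynomial (Fin n) ℂ) (K n)).comp (MvPolynomial.C)

/-- The (simply-laced) Cartan matrix attached to the underlying graph of a quiver,
the quiver being recorded by its arrow-count function `arr`. -/
def cartan {n : ℕ} (arr : Fin n → Fin n → ℕ) (i j : Fin n) : ℤ :=
  if i = j then 2 else -((arr i j : ℤ) + (arr j i : ℤ))

/-- Simple reflection `s_i` acting on the root lattice `Fin n → ℤ`. -/
def sref {n : ℕ} (A : Fin n → Fin n → ℤ) (i : Fin n) (v : Fin n → ℤ) : Fin n → ℤ :=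
  v - (∑ j, A i j * v j) • Pi.single i 1

/-- Action of a word in the simple reflections (the word `[i₁, …, i_N]` acts as
`s_{i₁} ∘ ⋯ ∘ s_{i_N}`). -/
def wact {n : ℕ} (A : Fin n → Fin n → ℤ) : List (Fin n) → (Fin n → ℤ) → (Fin n → ℤ)
  | [] => fun v => v
  | i :: t => fun v => sref A i (wact A t v)

/-- `i` is a source of the quiver. -/
def isSource {n : ℕ} (arr : Fin n → Fin n → ℕ) (i : Fin n) : Prop := ∀ j, arr j i = 0

/-- The quiver obtained by reversing all arrows incident to `i`. -/
def reflQ {n : ℕ} (arr : Fin n → Fin n → ℕ) (i : Fin n) : Fin n → Fin n → ℕ :=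
  fun a b => if a = i ∨ b = i then arr b a else arr a b

/-- A word is adapted to a quiver: each letter is a source of the quiver obtained by
reflecting at the previous letters. -/
def AdaptedTo {n : ℕ} (arr : Fin n → Fin n → ℕ) : List (Fin n) → Prop
  | [] => True
  | i :: t => isSource arr i ∧ AdaptedTo (reflQ arr i) t

/-- A word is reduced (no shorter word represents the same Weyl group element). -/
def IsReduced {n : ℕ} (A : Fin n → Fin n → ℤ) (l : List (Fin n)) : Prop :=
  ∀ l' : List (Fin n), wact A l' = wact A l → l.length ≤ l'.length

/-- Existence of an oriented path in the quiver. -/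
def Reach {n : ℕ} (arr : Fin n → Fin n → ℕ) : Fin n → Fin n → Prop :=
  Relation.ReflTransGen fun a b => arr a b ≠ 0

/-- The Euler form `⟨·,·⟩_Q` of the quiver `Q` with arrow counts `arr`. -/
def eulerForm {n : ℕ} (arr : Fin n → Fin n → ℕ) (u v : Fin n → ℤ) : ℤ :=
  ∑ i, ∑ j, u i * ((if i = j then 1 else 0) - (arr i j : ℤ)) * v j

/-- The symmetrized invariant bilinear form `(·,·)` on the root lattice. -/
def bform {n : ℕ} (arr : Fin n → Fin n → ℕ) (u v : Fin n → ℤ) : ℤ :=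
  ∑ i, ∑ j, u i * cartan arr i j * v j

/-- The dual quiver `Q*`: `#{k → l in Q*} = #{l* → k* in Q}`. -/
def dualArr {n : ℕ} (st : Fin n → Fin n) (arr : Fin n → Fin n → ℕ) :
    Fin n → Fin n → ℕ :=
  fun k l => arr (st l) (st k)

/-- The exponent lattice of Laurent monomials in the variables `Y_{i,p}`. -/
abbrev Mon (n : ℕ) := (Fin n × ℤ) →₀ ℤ

/-- The Laurent polynomial ring `ℂ ⊗ 𝒴_ℤ` in the variables `Y_{i,p}`. -/
abbrev Yring (n : ℕ) := AddMonoidAlgebra ℂ (Mon n)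

/-- The exponent vector of the variable `Y_{i,p}`. -/
def Ymon {n : ℕ} (i : Fin n) (p : ℤ) : Mon n := Finsupp.single (i, p) 1

/-- The exponent vector of `A_{i,s} = Y_{i,s-1} Y_{i,s+1} ∏_{j ∼ i} Y_{j,s}^{-1}`. -/
def Amon {n : ℕ} (arr : Fin n → Fin n → ℕ) (i : Fin n) (s : ℤ) : Mon n :=
  Finsupp.single (i, s - 1) 1 + Finsupp.single (i, s + 1) 1
    - ∑ k, ((arr i k : ℤ) + (arr k i : ℤ)) • Finsupp.single (k, s) 1

/-- The exponent vector of the dominant monomial `Y_{i,p} Y_{i,p+2} ⋯ Y_{i,p+2k-2}`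
of the Kirillov-Reshetikhin module `X_{i,p}^{(k)}`. -/
def YmonKR {n : ℕ} (i : Fin n) (p : ℤ) (k : ℕ) : Mon n :=
  ∑ t ∈ Finset.range k, Finsupp.single (i, p + 2 * (t : ℤ)) 1

/-- All the combinatorial data attached to a simply-laced Dynkin quiver `Q` with a
height function `ξ` adapted to `Q`: the Auslander-Reiten roots `β_{j,s}`, the longest
element `w₀` and the involution `*`, the Coxeter transform `τ_Q` (with Coxeter number
`h`), and the coefficients `C̃_{i,j}(m)` of the inverse quantum Cartan matrix, each
characterized by its defining property. -/
structure Setup (n h : ℕ) : Type where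
  /-- arrow counts of the quiver `Q` -/
  arr : Fin n → Fin n → ℕ
  /-- no multiple edges (simply-laced diagram) -/
  hsl : ∀ i j, arr i j + arr j i ≤ 1
  /-- no loops -/
  hloop : ∀ i, arr i i = 0
  /-- the height function -/
  xi : Fin n → ℤ
  /-- the height function is adapted to `Q` -/
  hxi : ∀ i j, arr i j ≠ 0 → xi j = xi i - 1
  /-- an enumeration of the vertices adapted to `Q` (defining the Coxeter transform) -/
  ord : List (Fin n)
  hord_nodup : ord.Nodup
  hord_mem : ∀ i, i ∈ ord
  hord_adapted : AdaptedTo arr ord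
  /-- a word representing the longest element `w₀` -/
  lw0 : List (Fin n)
  /-- the involution `*` of the Dynkin diagram -/
  star : Fin n → Fin n
  hstar : ∀ i, star (star i) = i
  /-- `w₀ (α_i) = - α_{i*}`, which characterizes the longest element -/
  hw0 : ∀ i, wact (cartan arr) lw0 (Pi.single i 1) = - Pi.single (star i) 1
  /-- `h` is the order of the Coxeter transform, i.e. the Coxeter number -/
  hcox : (wact (cartan arr) ord)^[h] = id
  hcox_min : ∀ m, 0 < m → m < h → (wact (cartan arr) ord)^[m] ≠ id
  /-- the Auslander-Reiten roots `β_{j,s}` -/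
  beta : Fin n → ℤ → Fin n → ℤ
  /-- `β_{j,ξ(j)} = dim I_j = ∑_{k ⇝ j} α_k` -/
  hbeta_inj : ∀ j k, beta j (xi j) k = if Reach arr k j then 1 else 0
  /-- `β_{j,p-2} = τ_Q (β_{j,p})` -/
  hbeta_tau : ∀ j p, beta j (p - 2) = wact (cartan arr) ord (beta j p)
  /-- the coefficients `C̃_{i,j}(m)` of the entries of the inverse quantum Cartan matrix -/
  Ct : Fin n → Fin n → ℤ → ℤ
  /-- `C̃_{i,j}(m) = 0` for `m ≤ 0` -/
  hCt_zero : ∀ i j m, m ≤ 0 → Ct i j m = 0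
  /-- the defining recurrence `C(z) C̃(z) = Id`, coefficientwise -/
  hCt_rec : ∀ i j m, Ct i j (m - 1) + Ct i j (m + 1)
      - ∑ k, ((arr i k : ℤ) + (arr k i : ℤ)) * Ct k j m = if i = j ∧ m = 0 then 1 else 0

namespace Setup

variable {n h : ℕ} (S : Setup n h)

/-- The Coxeter transform `τ_Q`. -/
def tau : (Fin n → ℤ) → (Fin n → ℤ) := wact (cartan S.arr) S.ord

/-- The longest element `w₀`. -/
def w0 : (Fin n → ℤ) → (Fin n → ℤ) := wact (cartan S.arr) S.lw0

/-- `(i,p) ∈ Î_ℤ`, i.e. `p ∈ i + 2ℤ` (parity normalized by the height function). -/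
def Ipar (x : Fin n × ℤ) : Prop := (x.2 - S.xi x.1) % 2 = 0

/-- `D̃_ξ (Y_{i,p})` for `p ≤ ξ(i)`:
`∏_{j ∈ I, s ∈ ξ(j) - 2ℤ≥0} β_{j,s}^{C̃_{i,j}(s-p-1) - C̃_{i,j}(s-p+1)}`
(all factors with `s < p` have exponent `0`, so the product is finite), computed with
an arbitrary realization `lv` of root-lattice elements as elements of `K n`. -/
def Dy (lv : (Fin n → ℤ) → K n) (i : Fin n) (p : ℤ) : K n :=
  ∏ j : Fin n, ∏ t ∈ Finset.range ((S.xi j - p).toNat + 1),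
    lv (S.beta j (S.xi j - 2 * (t : ℤ))) ^
      (S.Ct i j (S.xi j - 2 * (t : ℤ) - p - 1) - S.Ct i j (S.xi j - 2 * (t : ℤ) - p + 1))

/-- `D̃_ξ (Y_{i,p})` extended to all `p` by the `2h`-periodicity
`D̃_ξ(Y_{i,p}) = D̃_ξ(Y_{i,p-2mh})` (`m ≥ 0`, `p - 2mh ≤ ξ(i)`). -/
def DyE (lv : (Fin n → ℤ) → K n) (i : Fin n) (p : ℤ) : K n :=
  S.Dy lv i (p - 2 * (h : ℤ) * max (p - S.xi i) 0)

/-- `D̃_ξ` on a Laurent monomial in the `Y_{i,p}`. -/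
def Dmon (lv : (Fin n → ℤ) → K n) (m : Mon n) : K n :=
  ∏ x ∈ m.support, S.DyE lv x.1 x.2 ^ m x

/-- `D̃_ξ` as a map on the Laurent polynomial ring `ℂ ⊗ 𝒴_ℤ`. -/
def DT (lv : (Fin n → ℤ) → K n) (f : Yring n) : K n :=
  Finsupp.sum f.coeff fun m c => cK c * S.Dmon lv m

/-- Truncation of an element of `𝒴_ℤ` with respect to the height function `ξ`:
drop all monomials involving a variable `Y_{i,p}` with `p > ξ(i)`. -/
def trunc (f : Yring n) : Yring n :=
  AddMonoidAlgebra.ofCoeff (Finsupp.filter (fun m : Mon n => ∀ x ∈ m.support, x.2 ≤ S.xi x.1) f.coeff)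

end Setup

/-- The Grothendieck ring `K₀(𝒞_ℤ)`, realized as the polynomial ring on the classes
of the fundamental modules `L(Y_{i,p})`. -/
abbrev K0 (n : ℕ) := MvPolynomial (Fin n × ℤ) ℂ

/-- Evaluation of a class in `K₀(𝒞_ℤ)` obtained by assigning a value in `K n` to each
fundamental class (multiplicative extension). -/
def fundEvalK {n : ℕ} (vals : Fin n × ℤ → K n) : K0 n →+* K n :=
  MvPolynomial.eval₂Hom (cKHom n) vals

/-- The `q`-character homomorphism `χ_q : K₀(𝒞_ℤ) → 𝒴_ℤ`, determined by the
`q`-characters of the fundamental modules. -/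
def fundEvalY {n : ℕ} (chi : Fin n × ℤ → Yring n) : K0 n →+* Yring n :=
  MvPolynomial.eval₂Hom (AddMonoidAlgebra.singleZeroRingHom) chi

/-- The map `D̄` (for `lv = lin`) resp. `D̄* = ψ ∘ D̃_{ξ*} ∘ χ̃*_q`
(for `lv = linStar star`): on a fundamental class `[L(Y_{i,p})]` it is
`D̃_ξ(χ̃_q(L(Y_{i,p})))` if `p ≤ ξ(i)` and `0` otherwise, extended multiplicatively
to `K₀(𝒞_ℤ)`. -/
def DBarCl {n h : ℕ} (S : Setup n h) (lv : (Fin n → ℤ) → K n)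
    (chiF : Fin n → ℤ → Yring n) : K0 n →+* K n :=
  fundEvalK fun x => if x.2 ≤ S.xi x.1 then S.DT lv (S.trunc (chiF x.1 x.2)) else 0

/-- The data of the `q`-characters and Grothendieck classes of the
Kirillov-Reshetikhin modules `X_{i,p}^{(k)}` of `𝒞_ℤ`, with their defining
properties (dominant monomial, T-systems). The parameter `a` records the arrow
counts of (any orientation of) the Dynkin diagram. -/
structure RepData (n : ℕ) (a : Fin n → Fin n → ℕ) : Type where
  /-- the `q`-character of `X_{i,p}^{(k)}` -/
  chiKR : Fin n → ℤ → ℕ → Yring n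
  /-- the class of `X_{i,p}^{(k)}` in `K₀(𝒞_ℤ)` -/
  krK : Fin n → ℤ → ℕ → K0 n
  hchi0 : ∀ i p, chiKR i p 0 = 1
  hkr0 : ∀ i p, krK i p 0 = 1
  /-- `X_{i,p}^{(1)} = L(Y_{i,p})` is fundamental -/
  hkr1 : ∀ i p, krK i p 1 = MvPolynomial.X (i, p)
  /-- compatibility: `χ_q` of the class is the `q`-character -/
  hcompat : ∀ i p k, fundEvalY (fun x => chiKR x.1 x.2 1) (krK i p k) = chiKR i p k
  /-- the renormalized `q`-character is a polynomial in the `A_{j,s}^{-1}` with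
  constant term `1` -/
  hhighest : ∀ i p k, 1 ≤ k → ∃ P : Yring n,
      chiKR i p k = AddMonoidAlgebra.single (YmonKR i p k) 1 * P ∧
      Finsupp.instFunLike.coe P.coeff 0 = 1 ∧
      ∀ m ∈ Finsupp.support P.coeff, m ∈ AddSubmonoid.closure {x : Mon n | ∃ j s, x = - Amon a j s}
  /-- the T-system relations -/
  hT : ∀ i p k, 1 ≤ k → chiKR i p k * chiKR i (p + 2) k
      = chiKR i p (k + 1) * chiKR i (p + 2) (k - 1)
        + ∏ j, chiKR j (p + 1) k ^ (a i j + a j i)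

/-- The shift functor on (the index set of) indecomposable objects of the derived
category: `M_{j,s}[m] = M_{j^{*(m)}, s + mh}`. -/
def shiftOb {n h : ℕ} (S : Setup n h) (m : ℤ) (y : Fin n × ℤ) : Fin n × ℤ :=
  (if m % 2 = 0 then y.1 else S.star y.1, y.2 + m * (h : ℤ))

/-- Data of the dimensions of `Hom` spaces between indecomposable objects of the
bounded derived category `D^b(Rep Q)`; the indecomposables are indexed by `Î_ℤ`
through `(i,p) ↦ M_{i,p}` (with `M_{j,ξ(j)} = I_j`), and the defining properties
(directedness, Serre duality, relation with the Euler form) are recorded. -/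
structure HomData {n h : ℕ} (S : Setup n h) : Type where
  /-- `homDim x y = dim Hom(M_x, M_y)` -/
  homDim : (Fin n × ℤ) → (Fin n × ℤ) → ℕ
  hfin : ∀ x, {y : Fin n × ℤ | S.Ipar y ∧ homDim x y ≠ 0}.Finite
  hfuture : ∀ x y, homDim x y ≠ 0 → x.2 ≤ y.2
  /-- Serre duality: `Hom(X, Y) ≅ Hom(S⁻¹Y, X)*` with `S⁻¹ M_{j,s} = M_{j*, s-h+2}` -/
  hserre : ∀ x y : Fin n × ℤ, homDim x y = homDim (S.star y.1, y.2 - (h : ℤ) + 2) x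
  /-- directedness: nonvanishing in at most one shift -/
  hdirected : ∀ x y m m', homDim x (shiftOb S m y) ≠ 0 → homDim x (shiftOb S m' y) ≠ 0 → m = m'
  /-- `⟨β_x, β_y⟩_Q = ∑_m (-1)^m dim Hom(M_x, M_y[m])` -/
  heuler_zero : ∀ x y, S.Ipar x → S.Ipar y → (∀ m : ℤ, homDim x (shiftOb S m y) = 0) →
      eulerForm S.arr (S.beta x.1 x.2) (S.beta y.1 y.2) = 0
  heuler_ne : ∀ x y, S.Ipar x → S.Ipar y → ∀ m : ℤ, homDim x (shiftOb S m y) ≠ 0 →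
      eulerForm S.arr (S.beta x.1 x.2) (S.beta y.1 y.2)
        = (Int.negOnePow m : ℤ) * homDim x (shiftOb S m y)

/-- `d_i := #{N indecomposable in D^b(Rep Q) : Hom(I_i, N) ≠ 0}`. -/
def HomData.d {n h : ℕ} {S : Setup n h} (HD : HomData S) (i : Fin n) : ℕ :=
  {y : Fin n × ℤ | S.Ipar y ∧ HD.homDim (i, S.xi i) y ≠ 0}.ncard

/-- `d` extended to all integer labels (vertices are labelled `1, …, n`), with the
convention `d_m := 1` for `m ≤ 0` or `m > n`. -/
def HomData.dext {n h : ℕ} {S : Setup n h} (HD : HomData S) (m : ℤ) : ℤ :=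
  if hm : 1 ≤ m ∧ m ≤ (n : ℤ) then (HD.d ⟨(m - 1).toNat, by omega⟩ : ℤ) else 1

/-- The two classical types considered. -/
inductive CType | A | D
deriving DecidableEq

/-- Adjacency (edge count) of the Dynkin diagram of type `A_n` resp. `D_n`, the
vertices being labelled `1, …, n` (vertex `i : Fin n` has label `i.val + 1`;
in type `D_n` the spin nodes are `n-1` and `n`, both joined to `n-2`). -/
def adjC (ct : CType) (n : ℕ) (i j : Fin n) : ℕ :=
  match ct with
  | .A => if i.val + 1 = j.val ∨ j.val + 1 = i.val then 1 else 0
  | .D => if (i.val + 1 = j.val ∧ j.val + 2 ≤ n) ∨ (j.val + 1 = i.val ∧ i.val + 2 ≤ n)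
        ∨ (i.val + 3 = n ∧ j.val + 1 = n) ∨ (j.val + 3 = n ∧ i.val + 1 = n) then 1 else 0

/-- The monotonic orientation `Q₀` (each edge oriented towards the larger label). -/
def arrMono (ct : CType) (n : ℕ) (i j : Fin n) : ℕ :=
  if i.val < j.val then adjC ct n i j else 0

/-- `i` is a spin node (type `D_n`, label `n-1` or `n`). -/
def IsSpin (ct : CType) (n : ℕ) (i : Fin n) : Prop :=
  ct = CType.D ∧ (i.val + 2 = n ∨ i.val + 1 = n)

/-- The diagram automorphism `σ` of `D_n` exchanging the two spin nodes. -/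
def sigmaD {n : ℕ} (i : Fin n) : Fin n :=
  if h2 : i.val + 2 = n then ⟨n - 1, by omega⟩
  else if h1 : i.val + 1 = n then ⟨n - 2, by omega⟩
  else i

/-- `σ` (the identity in type `A`). -/
def sigmaC (ct : CType) {n : ℕ} : Fin n → Fin n :=
  match ct with
  | .A => id
  | .D => sigmaD

/-- `σ^m` for an integer `m` (`σ` is an involution). -/
def sigmaPowZ (ct : CType) {n : ℕ} (m : ℤ) (i : Fin n) : Fin n :=
  if m % 2 = 0 then i else sigmaC ct i

/-- `γ_i := dim I*_i`, the dimension vector of the indecomposable injective of `Q*`. -/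
def gammaV {n h : ℕ} (T : Setup n h) (i : Fin n) : Fin n → ℤ :=
  fun k => if Reach T.arr k i then 1 else 0

/-- `β_i^{(j)} := τ^{j-1}(γ_i)`. -/
def betaUp {n h : ℕ} (T : Setup n h) (i : Fin n) (j : ℕ) : Fin n → ℤ :=
  T.tau^[j - 1] (gammaV T i)

/-- The root-lattice elements `γ_{i,j}` (for `j ≥ 1`; `γ_{i,j} := 0` for `j = 0`). -/
def gammaIJ (ct : CType) {n h : ℕ} (T : Setup n h) (hn : 0 < n) (i : Fin n) (j : ℕ) :
    Fin n → ℤ :=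
  if j = 0 then 0
  else if IsSpin ct n i ∧ j % h = (n - 1) % h then
    betaUp T (sigmaPowZ ct ((n : ℤ) - (j : ℤ)) i) (n - 1)
  else ∑ l ∈ Finset.Icc 1 j, betaUp T (⟨0, hn⟩ : Fin n) l

/-- `γ_{i,j}` indexed by the label `m = i.val + 1` of the vertex. -/
def gammaN (ct : CType) {n h : ℕ} (T : Setup n h) (hn : 0 < n) (m j : ℕ) : Fin n → ℤ :=
  gammaIJ ct T hn (if hm : m - 1 < n then ⟨m - 1, hm⟩ else ⟨0, hn⟩) j

/-- `R_i^{(k)} := (-1)^i ∏_{j=k-i}^{k-1} γ_{i,j}` (indexed by the label `m` of `i`);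
in particular `R_i^{(k)} = 0` for `k ≤ i`. -/
def Rnat (ct : CType) {n h : ℕ} (T : Setup n h) (hn : 0 < n) (m k : ℕ) : K n :=
  (-1 : K n) ^ m * ∏ j ∈ Finset.Icc (k - m) (k - 1), lin (gammaN ct T hn m j)

/-- `P_i^{(k)} := D̄*(X_{i, ξ*(i) - 2k + 2}^{(k)})`. -/
def Pval {n hc : ℕ} (T : Setup n hc) {a : Fin n → Fin n → ℕ} (rd : RepData n a)
    (i : Fin n) (k : ℕ) : K n :=
  DBarCl T (linStar T.star) (fun j q => rd.chiKR j q 1)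
    (rd.krK i (T.xi i - 2 * (k : ℤ) + 2) k)

/-- `P` indexed by labels, with `P_m^{(k)} := 1` for `m = 0` or `m > n`. -/
def Plab {n hc : ℕ} (T : Setup n hc) {a : Fin n → Fin n → ℕ} (rd : RepData n a)
    (m k : ℕ) : K n :=
  if hm : 1 ≤ m ∧ m ≤ n then Pval T rd ⟨m - 1, by omega⟩ k else 1


section CLAux

variable {n : ℕ}

/-- The pairing `⟨α_i^∨, v⟩`. -/
def pairA (A : Fin n → Fin n → ℤ) (i : Fin n) (v : Fin n → ℤ) : ℤ := ∑ j, A i j * v j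

lemma sref_apply (A : Fin n → Fin n → ℤ) (i : Fin n) (v : Fin n → ℤ) (k : Fin n) :
    sref A i v k = v k - (if k = i then pairA A i v else 0) := by
  simp [sref, pairA, Pi.single_apply, mul_ite]

lemma sref_apply_ne (A : Fin n → Fin n → ℤ) {i k : Fin n} (h : k ≠ i) (v : Fin n → ℤ) :
    sref A i v k = v k := by
  simp [sref_apply, h]

lemma pairA_sref_self (A : Fin n → Fin n → ℤ) (hA2 : ∀ i, A i i = 2) (i : Fin n)
    (v : Fin n → ℤ) : pairA A i (sref A i v) = -pairA A i v := by
  unfold pairA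
  simp only [sref_apply, mul_sub, mul_ite, mul_zero, Finset.sum_sub_distrib,
    Finset.sum_ite_eq', Finset.mem_univ, if_true, hA2]
  unfold pairA; ring

lemma sref_sref (A : Fin n → Fin n → ℤ) (hA2 : ∀ i, A i i = 2) (i : Fin n) (v : Fin n → ℤ) :
    sref A i (sref A i v) = v := by
  funext k
  rw [sref_apply, sref_apply, pairA_sref_self A hA2]
  by_cases hk : k = i <;> simp [hk]

lemma wact_nil (A : Fin n → Fin n → ℤ) (v : Fin n → ℤ) : wact A [] v = v := rfl

lemma wact_cons (A : Fin n → Fin n → ℤ) (i : Fin n) (t : List (Fin n)) (v : Fin n → ℤ) :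
    wact A (i :: t) v = sref A i (wact A t v) := rfl

lemma wact_one (A : Fin n → Fin n → ℤ) (i : Fin n) (v : Fin n → ℤ) :
    wact A [i] v = sref A i v := rfl

lemma wact_append (A : Fin n → Fin n → ℤ) (x y : List (Fin n)) (v : Fin n → ℤ) :
    wact A (x ++ y) v = wact A x (wact A y v) := by
  induction x with
  | nil => rfl
  | cons i t ih => simp only [List.cons_append, wact_cons, ih]

lemma sref_add (A : Fin n → Fin n → ℤ) (i : Fin n) (u v : Fin n → ℤ) :
    sref A i (u + v) = sref A i u + sref A i v := by
  funext k
  have : pairA A i (u + v) = pairA A i u + pairA A i v := by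
    unfold pairA; rw [← Finset.sum_add_distrib]; exact Finset.sum_congr rfl fun j _ => by
      simp [mul_add]
  simp only [sref_apply, Pi.add_apply, this]
  by_cases hk : k = i <;> simp [hk] <;> ring

lemma sref_neg (A : Fin n → Fin n → ℤ) (i : Fin n) (v : Fin n → ℤ) :
    sref A i (-v) = -sref A i v := by
  funext k
  have : pairA A i (-v) = -pairA A i v := by
    unfold pairA; rw [← Finset.sum_neg_distrib]; exact Finset.sum_congr rfl fun j _ => by
      simp [Pi.neg_apply]
  simp only [sref_apply, Pi.neg_apply, this]
  by_cases hk : k = i <;> simp [hk] <;> ring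

lemma wact_add (A : Fin n → Fin n → ℤ) (m : List (Fin n)) (u v : Fin n → ℤ) :
    wact A m (u + v) = wact A m u + wact A m v := by
  induction m with
  | nil => rfl
  | cons i t ih => simp only [wact_cons, ih, sref_add]

lemma wact_neg (A : Fin n → Fin n → ℤ) (m : List (Fin n)) (v : Fin n → ℤ) :
    wact A m (-v) = -wact A m v := by
  induction m with
  | nil => rfl
  | cons i t ih => simp only [wact_cons, ih, sref_neg]

lemma wact_reverse_left (A : Fin n → Fin n → ℤ) (hA2 : ∀ i, A i i = 2)
    (m : List (Fin n)) (v : Fin n → ℤ) :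
    wact A m.reverse (wact A m v) = v := by
  induction m generalizing v with
  | nil => rfl
  | cons i t ih =>
      rw [List.reverse_cons, wact_append]
      simp only [wact_cons, wact_nil]
      rw [sref_sref A hA2]
      exact ih v

lemma wact_reverse_right (A : Fin n → Fin n → ℤ) (hA2 : ∀ i, A i i = 2)
    (m : List (Fin n)) (v : Fin n → ℤ) :
    wact A m (wact A m.reverse v) = v := by
  have := wact_reverse_left A hA2 m.reverse v
  rwa [List.reverse_reverse] at this

lemma wact_apply_of_not_mem (A : Fin n → Fin n → ℤ) {m : List (Fin n)} {k : Fin n}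
    (h : k ∉ m) (v : Fin n → ℤ) : wact A m v k = v k := by
  induction m with
  | nil => rfl
  | cons i t ih =>
      have hk : k ≠ i := fun e => h (e ▸ (List.mem_cons_self (a := i) (l := t)))
      rw [wact_cons, sref_apply_ne A hk, ih (fun hm => h (List.mem_cons_of_mem i hm))]

end CLAux

section CLAux2

variable {n : ℕ}

/-- symmetrized pairing -/
def bformA (A : Fin n → Fin n → ℤ) (u v : Fin n → ℤ) : ℤ := ∑ i, u i * pairA A i v

lemma bformA_single_left (A : Fin n → Fin n → ℤ) (k : Fin n) (v : Fin n → ℤ) :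
    bformA A (Pi.single k 1) v = pairA A k v := by
  unfold bformA
  simp [Pi.single_apply, ite_mul]

lemma pairA_single (A : Fin n → Fin n → ℤ) (i j : Fin n) :
    pairA A i (Pi.single j 1) = A i j := by
  unfold pairA; simp [Pi.single_apply, mul_ite]

lemma bformA_single_right (A : Fin n → Fin n → ℤ) (hsym : ∀ i j, A i j = A j i)
    (k : Fin n) (u : Fin n → ℤ) :
    bformA A u (Pi.single k 1) = pairA A k u := by
  unfold bformA
  simp only [pairA_single]
  unfold pairA
  exact Finset.sum_congr rfl fun i _ => by rw [hsym k i]; ring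

lemma bformA_sub_left (A : Fin n → Fin n → ℤ) (u w v : Fin n → ℤ) :
    bformA A (u - w) v = bformA A u v - bformA A w v := by
  unfold bformA
  rw [← Finset.sum_sub_distrib]
  exact Finset.sum_congr rfl fun i _ => by simp [Pi.sub_apply]; ring

lemma pairA_sub (A : Fin n → Fin n → ℤ) (i : Fin n) (u w : Fin n → ℤ) :
    pairA A i (u - w) = pairA A i u - pairA A i w := by
  unfold pairA
  rw [← Finset.sum_sub_distrib]
  exact Finset.sum_congr rfl fun j _ => by simp [Pi.sub_apply]; ring

lemma pairA_smul' (A : Fin n → Fin n → ℤ) (i : Fin n) (c : ℤ) (v : Fin n → ℤ) :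
    pairA A i (c • v) = c * pairA A i v := by
  unfold pairA
  rw [Finset.mul_sum]
  exact Finset.sum_congr rfl fun j _ => by simp [Pi.smul_apply]; ring

lemma bformA_sub_right (A : Fin n → Fin n → ℤ) (u v w : Fin n → ℤ) :
    bformA A u (v - w) = bformA A u v - bformA A u w := by
  unfold bformA
  rw [← Finset.sum_sub_distrib]
  exact Finset.sum_congr rfl fun i _ => by rw [pairA_sub]; ring

lemma bformA_smul_left (A : Fin n → Fin n → ℤ) (c : ℤ) (u v : Fin n → ℤ) :
    bformA A (c • u) v = c * bformA A u v := by
  unfold bformA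
  rw [Finset.mul_sum]
  exact Finset.sum_congr rfl fun i _ => by simp [Pi.smul_apply]; ring

lemma bformA_smul_right (A : Fin n → Fin n → ℤ) (c : ℤ) (u v : Fin n → ℤ) :
    bformA A u (c • v) = c * bformA A u v := by
  unfold bformA
  rw [Finset.mul_sum]
  exact Finset.sum_congr rfl fun i _ => by rw [pairA_smul']; ring

lemma bformA_sref (A : Fin n → Fin n → ℤ) (hA2 : ∀ i, A i i = 2)
    (hsym : ∀ i j, A i j = A j i) (k : Fin n) (u v : Fin n → ℤ) :
    bformA A (sref A k u) (sref A k v) = bformA A u v := by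
  have h1 : sref A k u = u - pairA A k u • Pi.single k 1 := rfl
  have h2 : sref A k v = v - pairA A k v • Pi.single k 1 := rfl
  have hp2 : pairA A k (Pi.single k 1) = 2 := by rw [pairA_single, hA2]
  simp only [h1, h2, bformA_sub_left, bformA_sub_right, bformA_smul_left,
    bformA_smul_right, bformA_single_left, bformA_single_right A hsym, hp2,
    pairA_sub, pairA_smul', pairA_single]
  ring

lemma bformA_wact (A : Fin n → Fin n → ℤ) (hA2 : ∀ i, A i i = 2)
    (hsym : ∀ i j, A i j = A j i) (m : List (Fin n)) (u v : Fin n → ℤ) :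
    bformA A (wact A m u) (wact A m v) = bformA A u v := by
  induction m generalizing u v with
  | nil => rfl
  | cons i t ih => rw [wact_cons, wact_cons, bformA_sref A hA2 hsym, ih]

lemma pairA_neg' (A : Fin n → Fin n → ℤ) (i : Fin n) (v : Fin n → ℤ) :
    pairA A i (-v) = -pairA A i v := by
  unfold pairA
  rw [← Finset.sum_neg_distrib]
  exact Finset.sum_congr rfl fun j _ => by simp [Pi.neg_apply]

lemma bformA_neg_neg (A : Fin n → Fin n → ℤ) (u v : Fin n → ℤ) :
    bformA A (-u) (-v) = bformA A u v := by
  unfold bformA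
  exact Finset.sum_congr rfl fun i _ => by simp [Pi.neg_apply, pairA_neg']

lemma bformA_single_single (A : Fin n → Fin n → ℤ) (i j : Fin n) :
    bformA A (Pi.single i 1) (Pi.single j 1) = A i j := by
  rw [bformA_single_left, pairA_single]

end CLAux2

section CLAux3

variable {n : ℕ}

/-- Reflecting a quiver at all letters of a word successively. -/
def flipQ {n : ℕ} : (Fin n → Fin n → ℕ) → List (Fin n) → (Fin n → Fin n → ℕ)
  | B, [] => B
  | B, i :: t => flipQ (reflQ B i) t

/-- Opposite quiver. -/
def opQ {n : ℕ} (B : Fin n → Fin n → ℕ) : Fin n → Fin n → ℕ := fun a b => B b a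

lemma flipQ_nil (B : Fin n → Fin n → ℕ) : flipQ B [] = B := rfl

lemma flipQ_cons (B : Fin n → Fin n → ℕ) (i : Fin n) (t : List (Fin n)) :
    flipQ B (i :: t) = flipQ (reflQ B i) t := rfl

lemma flipQ_append (B : Fin n → Fin n → ℕ) (x y : List (Fin n)) :
    flipQ B (x ++ y) = flipQ (flipQ B x) y := by
  induction x generalizing B with
  | nil => rfl
  | cons i t ih => simp only [List.cons_append, flipQ_cons, ih]

lemma reflQ_reflQ (B : Fin n → Fin n → ℕ) (i : Fin n) : reflQ (reflQ B i) i = B := by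
  funext a b
  unfold reflQ
  by_cases h : a = i ∨ b = i
  · have h' : b = i ∨ a = i := h.symm
    simp [h, h']
  · simp [h]

lemma reflQ_op (B : Fin n → Fin n → ℕ) (i : Fin n) : reflQ (opQ B) i = opQ (reflQ B i) := by
  funext a b
  unfold reflQ opQ
  by_cases h : a = i ∨ b = i
  · have h' : b = i ∨ a = i := h.symm
    simp [h, h']
  · have h' : ¬ (b = i ∨ a = i) := fun hc => h hc.symm
    simp [h, h']

lemma reflQ_adj_sum (B : Fin n → Fin n → ℕ) (i a b : Fin n) :
    reflQ B i a b + reflQ B i b a = B a b + B b a := by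
  unfold reflQ
  by_cases h : a = i ∨ b = i
  · have h' : b = i ∨ a = i := h.symm
    simp [h, h']; ring
  · have h' : ¬ (b = i ∨ a = i) := fun hc => h hc.symm
    simp [h, h']

lemma flipQ_adj_sum (B : Fin n → Fin n → ℕ) (m : List (Fin n)) (a b : Fin n) :
    flipQ B m a b + flipQ B m b a = B a b + B b a := by
  induction m generalizing B with
  | nil => rfl
  | cons i t ih => rw [flipQ_cons, ih, reflQ_adj_sum]

/-- parity description of the fully reflected quiver -/
lemma flipQ_eq_parity (B : Fin n → Fin n → ℕ) (m : List (Fin n)) (a b : Fin n) :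
    flipQ B m a b = if (m.count a + m.count b) % 2 = 0 then B a b else B b a := by
  induction m generalizing B with
  | nil => simp [flipQ_nil]
  | cons i t ih =>
      rw [flipQ_cons, ih]
      rcases eq_or_ne a b with rfl | hab
      · simp only [reflQ]
        by_cases hia : i = a <;> simp [hia]
      · by_cases hia : i = a
        · subst hia
          have hib : i ≠ b := hab
          have hca : (i :: t).count i = t.count i + 1 := by
            simp [List.count_cons]
          have hcb : (i :: t).count b = t.count b := by
            simp [List.count_cons, hib, hib.symm, Ne.symm hib]
          rw [hca, hcb]
          have href1 : reflQ B i i b = B b i := by simp [reflQ]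
          have href2 : reflQ B i b i = B i b := by simp [reflQ]
          rw [href1, href2]
          rcases Nat.even_or_odd (t.count i + t.count b) with he | ho
          · have h1 : (t.count i + t.count b) % 2 = 0 := Nat.even_iff.mp he
            have h2 : (t.count i + 1 + t.count b) % 2 ≠ 0 := by omega
            simp [h1, h2]
          · have h1 : (t.count i + t.count b) % 2 ≠ 0 := by
              have := Nat.odd_iff.mp ho; omega
            have h2 : (t.count i + 1 + t.count b) % 2 = 0 := by
              have := Nat.odd_iff.mp ho; omega
            simp [h1, h2]
        · by_cases hib : i = b
          · subst hib
            have hca : (i :: t).count a = t.count a := by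
              simp [List.count_cons, hia, Ne.symm hia]
            have hcb : (i :: t).count i = t.count i + 1 := by simp [List.count_cons]
            rw [hca, hcb]
            have href1 : reflQ B i a i = B i a := by simp [reflQ]
            have href2 : reflQ B i i a = B a i := by simp [reflQ]
            rw [href1, href2]
            rcases Nat.even_or_odd (t.count a + t.count i) with he | ho
            · have h1 : (t.count a + t.count i) % 2 = 0 := Nat.even_iff.mp he
              have h2 : (t.count a + (t.count i + 1)) % 2 ≠ 0 := by omega
              simp [h1, h2]
            · have h1 : (t.count a + t.count i) % 2 ≠ 0 := by
                have := Nat.odd_iff.mp ho; omega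
              have h2 : (t.count a + (t.count i + 1)) % 2 = 0 := by
                have := Nat.odd_iff.mp ho; omega
              simp [h1, h2]
          · have hca : (i :: t).count a = t.count a := by
              simp [List.count_cons, hia, Ne.symm hia]
            have hcb : (i :: t).count b = t.count b := by
              simp [List.count_cons, hib, Ne.symm hib]
            have hr1 : reflQ B i a b = B a b := by simp [reflQ, hia, hib, Ne.symm hia, Ne.symm hib]
            have hr2 : reflQ B i b a = B b a := by simp [reflQ, hia, hib, Ne.symm hia, Ne.symm hib]
            rw [hca, hcb, hr1, hr2]

lemma adapted_nil (B : Fin n → Fin n → ℕ) : AdaptedTo B [] := trivial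

lemma adapted_cons (B : Fin n → Fin n → ℕ) (i : Fin n) (t : List (Fin n)) :
    AdaptedTo B (i :: t) ↔ isSource B i ∧ AdaptedTo (reflQ B i) t := Iff.rfl

lemma adapted_append (B : Fin n → Fin n → ℕ) (x y : List (Fin n)) :
    AdaptedTo B (x ++ y) ↔ AdaptedTo B x ∧ AdaptedTo (flipQ B x) y := by
  induction x generalizing B with
  | nil => simp [adapted_nil, flipQ_nil]
  | cons i t ih =>
      simp only [List.cons_append, adapted_cons, ih, flipQ_cons]
      tauto

lemma flip_op_flip (B : Fin n → Fin n → ℕ) (m : List (Fin n)) :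
    flipQ (opQ (flipQ B m)) m.reverse = opQ B := by
  induction m generalizing B with
  | nil => rfl
  | cons i t ih =>
      rw [List.reverse_cons, flipQ_cons, flipQ_append, ih (reflQ B i)]
      show reflQ (opQ (reflQ B i)) i = opQ B
      rw [← reflQ_op, reflQ_reflQ]

lemma reversed_adapted (B : Fin n → Fin n → ℕ) (m : List (Fin n))
    (h : AdaptedTo B m) : AdaptedTo (opQ (flipQ B m)) m.reverse := by
  induction m generalizing B with
  | nil => exact trivial
  | cons i t ih =>
      rw [adapted_cons] at h
      rw [List.reverse_cons, adapted_append, flipQ_cons]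
      refine ⟨ih (reflQ B i) h.2, ?_, trivial⟩
      rw [flip_op_flip]
      intro k
      show reflQ B i i k = 0
      simp [reflQ, h.1 k]

end CLAux3

section CLAux4

variable {n : ℕ}

/-- `η` is a height function adapted to the quiver `B`. -/
def HtAdapted (η : Fin n → ℤ) (B : Fin n → Fin n → ℕ) : Prop :=
  ∀ a b, B a b ≠ 0 → η b = η a - 1

lemma htAdapted_no_loop {η : Fin n → ℤ} {B : Fin n → Fin n → ℕ}
    (hη : HtAdapted η B) (i : Fin n) : B i i = 0 := by
  by_contra hc
  have := hη i i hc
  omega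

lemma htAdapted_reflQ {η : Fin n → ℤ} {B : Fin n → Fin n → ℕ}
    (hη : HtAdapted η B) {i : Fin n} (hi : isSource B i) :
    HtAdapted (fun v => if v = i then η v - 2 else η v) (reflQ B i) := by
  intro a b hab
  unfold reflQ at hab
  by_cases h : a = i ∨ b = i
  · rw [if_pos h] at hab
    rcases h with ha | hb
    · exact absurd (by rw [ha]; exact hi b) hab
    · have hai : a ≠ i := by
        intro hc
        exact hab (by rw [hc]; exact hi b)
      have hba := hη b a hab
      simp only [if_pos hb, if_neg hai]
      omega
  · rw [if_neg h] at hab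
    push_neg at h
    have := hη a b hab
    simp only [if_neg h.1, if_neg h.2]
    omega

lemma htAdapted_flipQ {η : Fin n → ℤ} {B : Fin n → Fin n → ℕ} (m : List (Fin n))
    (hη : HtAdapted η B) (hm : AdaptedTo B m) :
    HtAdapted (fun v => η v - 2 * (m.count v : ℤ)) (flipQ B m) := by
  induction m generalizing B η with
  | nil => simpa [flipQ_nil] using hη
  | cons i t ih =>
      rw [adapted_cons] at hm
      have h2 := ih (htAdapted_reflQ hη hm.1) hm.2
      rw [flipQ_cons]
      have hfun : (fun v => η v - 2 * (((i :: t).count v : ℕ) : ℤ))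
          = fun v => (if v = i then η v - 2 else η v) - 2 * ((t.count v : ℕ) : ℤ) := by
        funext v
        rcases eq_or_ne v i with rfl | hv
        · simp [List.count_cons]
          push_cast
          ring
        · simp [List.count_cons, hv, Ne.symm hv]
      rw [hfun]
      exact h2

/-- an enumeration of `s` adapted to `B` -/
def IsEnumOn (s : Finset (Fin n)) (B : Fin n → Fin n → ℕ) (e : List (Fin n)) : Prop :=
  e.Nodup ∧ (∀ v, v ∈ e ↔ v ∈ s) ∧ AdaptedTo B e

lemma exists_enum : ∀ (N : ℕ) (s : Finset (Fin n)) (B : Fin n → Fin n → ℕ)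
    (η : Fin n → ℤ), s.card ≤ N → HtAdapted η B →
    (∀ v ∈ s, ∀ k, B k v ≠ 0 → k ∈ s) → ∃ e, IsEnumOn s B e := by
  intro N
  induction N with
  | zero =>
      intro s B η hcard _ _
      have : s = ∅ := Finset.card_eq_zero.mp (Nat.le_zero.mp hcard)
      subst this
      exact ⟨[], List.nodup_nil, fun v => by simp, trivial⟩
  | succ N ih =>
      intro s B η hcard hη hcond
      rcases s.eq_empty_or_nonempty with rfl | hs
      · exact ⟨[], List.nodup_nil, fun v => by simp, trivial⟩
      · obtain ⟨j, hj, hjmax⟩ := s.exists_max_image η hs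
        have hsrc : isSource B j := by
          intro k
          by_contra hc
          have hk : k ∈ s := hcond j hj k hc
          have := hη k j hc
          have := hjmax k hk
          omega
        have hcard' : (s.erase j).card ≤ N := by
          have := Finset.card_erase_of_mem hj
          omega
        have hηad : HtAdapted (fun v => if v = j then η v - 2 else η v) (reflQ B j) :=
          htAdapted_reflQ hη hsrc
        have hcond' : ∀ v ∈ s.erase j, ∀ k, reflQ B j k v ≠ 0 → k ∈ s.erase j := by
          intro v hv k hk
          have hvj : v ≠ j := Finset.ne_of_mem_erase hv
          have hvs : v ∈ s := Finset.mem_of_mem_erase hv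
          rcases eq_or_ne k j with hkj | hkj
          · exfalso
            apply hk
            rw [hkj]
            show reflQ B j j v = 0
            simp [reflQ, hsrc v]
          · have hBkv : B k v ≠ 0 := by
              intro hc
              apply hk
              show reflQ B j k v = 0
              simp [reflQ, hkj, hvj, hc]
            exact Finset.mem_erase.mpr ⟨hkj, hcond v hvs k hBkv⟩
        obtain ⟨e', he'⟩ := ih (s.erase j) (reflQ B j) _ hcard' hηad hcond'
        refine ⟨j :: e', ?_, ?_, hsrc, he'.2.2⟩
        · exact List.nodup_cons.mpr ⟨fun hc => by
            have := (he'.2.1 j).mp hc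
            exact (Finset.notMem_erase j s) this, he'.1⟩
        · intro v
          rw [List.mem_cons, he'.2.1 v]
          constructor
          · rintro (rfl | hv)
            · exact hj
            · exact Finset.mem_of_mem_erase hv
          · intro hv
            rcases eq_or_ne v j with rfl | hvj
            · exact Or.inl rfl
            · exact Or.inr (Finset.mem_erase.mpr ⟨hvj, hv⟩)

end CLAux4

section CLAux5

variable {n : ℕ}

lemma pairA_sref (A : Fin n → Fin n → ℤ) (i j : Fin n) (v : Fin n → ℤ) :
    pairA A i (sref A j v) = pairA A i v - A i j * pairA A j v := by
  unfold pairA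
  simp only [sref_apply, mul_sub, mul_ite, mul_zero, Finset.sum_sub_distrib,
    Finset.sum_ite_eq', Finset.mem_univ, if_true]
  rfl

lemma sref_comm (A : Fin n → Fin n → ℤ) {i j : Fin n}
    (hij : A i j = 0) (hji : A j i = 0) (v : Fin n → ℤ) :
    sref A i (sref A j v) = sref A j (sref A i v) := by
  funext k
  simp only [sref_apply, pairA_sref, hij, hji, zero_mul, mul_zero, sub_zero]
  by_cases hki : k = i <;> by_cases hkj : k = j <;> simp [hki, hkj] <;> ring

lemma reflQ_comm (B : Fin n → Fin n → ℕ) (u v : Fin n) :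
    reflQ (reflQ B v) u = reflQ (reflQ B u) v := by
  funext a b
  simp only [reflQ]
  by_cases c1 : a = u ∨ b = u <;> by_cases c2 : a = v ∨ b = v <;>
    by_cases d1 : b = u ∨ a = u <;> by_cases d2 : b = v ∨ a = v <;>
    first
      | (exfalso; tauto)
      | simp [c1, c2, d1, d2]

lemma isSource_reflQ_iff {B : Fin n → Fin n → ℕ} {u v : Fin n} (hne : v ≠ u)
    (huv : B u v = 0) (hvu : B v u = 0) :
    isSource (reflQ B u) v ↔ isSource B v := by
  constructor
  · intro h k
    rcases eq_or_ne k u with rfl | hku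
    · exact huv
    · have := h k
      simpa [reflQ, hku, hne] using this
  · intro h k
    show reflQ B u k v = 0
    rcases eq_or_ne k u with rfl | hku
    · simp [reflQ, hvu]
    · simpa [reflQ, hku, hne] using h k

lemma adapted_prefix_nonadj {j : Fin n} {y : List (Fin n)} :
    ∀ (x : List (Fin n)) (B : Fin n → Fin n → ℕ), x.Nodup → j ∉ x →
    AdaptedTo B (x ++ j :: y) → isSource B j →
    ∀ u ∈ x, B u j = 0 ∧ B j u = 0 := by
  intro x
  induction x with
  | nil => intro B _ _ _ _ u hu; exact absurd hu ((List.not_mem_nil (a := u)))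
  | cons u t ih =>
      intro B hnd hjx had hj
      rw [List.cons_append, adapted_cons] at had
      have hju : j ≠ u := fun hc => hjx (hc ▸ (List.mem_cons_self (a := u) (l := t)))
      have hu1 : B u j = 0 := hj u
      have hu2 : B j u = 0 := had.1 j
      have hj' : isSource (reflQ B u) j := by
        intro k
        show reflQ B u k j = 0
        rcases eq_or_ne k u with rfl | hku
        · simp [reflQ, hu2]
        · simpa [reflQ, hku, hju] using hj k
      have hrec := ih (reflQ B u) (List.nodup_cons.mp hnd).2
        (fun hc => hjx (List.mem_cons_of_mem u hc)) had.2 hj'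
      intro w hw
      rcases List.mem_cons.mp hw with rfl | hwt
      · exact ⟨hu1, hu2⟩
      · have hwu : w ≠ u := fun hc => ((List.nodup_cons.mp hnd).1 (hc ▸ hwt))
        have := hrec w hwt
        constructor
        · have h1 := this.1
          simpa [reflQ, hwu, hju] using h1
        · have h2 := this.2
          simpa [reflQ, hwu, hju] using h2

lemma adapted_move_front (A : Fin n → Fin n → ℤ) {j : Fin n} {y : List (Fin n)} :
    ∀ (x : List (Fin n)) (B : Fin n → Fin n → ℕ), x.Nodup → j ∉ x →
    (∀ u ∈ x, B u j = 0 ∧ B j u = 0 ∧ A u j = 0 ∧ A j u = 0) →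
    AdaptedTo B (x ++ j :: y) →
    AdaptedTo B (j :: (x ++ y)) ∧ wact A (x ++ j :: y) = wact A (j :: (x ++ y)) := by
  intro x
  induction x with
  | nil => intro B _ _ _ had; exact ⟨had, rfl⟩
  | cons u t ih =>
      intro B hnd hjx hnon had
      rw [List.cons_append, adapted_cons] at had
      have hju : j ≠ u := fun hc => hjx (hc ▸ (List.mem_cons_self (a := u) (l := t)))
      have hnu := hnon u ((List.mem_cons_self (a := u) (l := t)))
      have hnon' : ∀ w ∈ t, reflQ B u w j = 0 ∧ reflQ B u j w = 0 ∧ A w j = 0 ∧ A j w = 0 := by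
        intro w hw
        have hwu : w ≠ u := fun hc => ((List.nodup_cons.mp hnd).1 (hc ▸ hw))
        have hn := hnon w (List.mem_cons_of_mem u hw)
        refine ⟨?_, ?_, hn.2.2.1, hn.2.2.2⟩
        · simpa [reflQ, hwu, hju] using hn.1
        · simpa [reflQ, hwu, hju] using hn.2.1
      have hrec := ih (reflQ B u) (List.nodup_cons.mp hnd).2
        (fun hc => hjx (List.mem_cons_of_mem u hc)) hnon' had.2
      have hjsrcR : isSource (reflQ B u) j := hrec.1.1
      have hjsrc : isSource B j := by
        intro k
        rcases eq_or_ne k u with rfl | hku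
        · exact hnu.1
        · have := hjsrcR k
          simpa [reflQ, hku, hju] using this
      have husrc : isSource (reflQ B j) u := by
        intro k
        show reflQ B j k u = 0
        rcases eq_or_ne k j with rfl | hkj
        · simp [reflQ, hnu.1]
        · simpa [reflQ, hkj, Ne.symm hju] using had.1 k
      constructor
      · refine ⟨hjsrc, ?_⟩
        show AdaptedTo (reflQ B j) (u :: (t ++ y))
        refine ⟨husrc, ?_⟩
        rw [reflQ_comm]
        exact hrec.1.2
      · funext v
        show wact A ((u :: t) ++ j :: y) v = wact A (j :: u :: (t ++ y)) v
        rw [List.cons_append, wact_cons]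
        have h1 : wact A (t ++ j :: y) v = wact A (j :: (t ++ y)) v := by rw [hrec.2]
        rw [h1, wact_cons, wact_cons, wact_cons]
        exact sref_comm A hnu.2.2.1 hnu.2.2.2 (wact A (t ++ y) v)

lemma wact_enum_unique (A : Fin n → Fin n → ℤ) (R : Fin n → Fin n → ℕ)
    (hRA : ∀ u v : Fin n, u ≠ v → R u v + R v u = 0 → A u v = 0 ∧ A v u = 0) :
    ∀ (e₂ e₁ : List (Fin n)) (B : Fin n → Fin n → ℕ),
    (∀ u v, u ∈ e₁ → v ∈ e₁ → u ≠ v → B u v + B v u = R u v + R v u) →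
    e₁.Nodup → e₂.Nodup → (∀ v, v ∈ e₁ ↔ v ∈ e₂) →
    AdaptedTo B e₁ → AdaptedTo B e₂ → wact A e₁ = wact A e₂ := by
  intro e₂
  induction e₂ with
  | nil =>
      intro e₁ B _ _ _ hmem _ _
      have : e₁ = [] := List.eq_nil_iff_forall_not_mem.mpr
        (fun a ha => ((List.not_mem_nil (a := a))) ((hmem a).mp ha))
      rw [this]
  | cons j t₂ ih =>
      intro e₁ B hadj hnd₁ hnd₂ hmem had₁ had₂
      have hj1 : j ∈ e₁ := (hmem j).mpr ((List.mem_cons_self (a := j) (l := t₂)))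
      obtain ⟨x, y, hxy⟩ := List.append_of_mem hj1
      subst hxy
      have hnx : x.Nodup := hnd₁.of_append_left
      have hnjy : (j :: y).Nodup := hnd₁.of_append_right
      have hjy : j ∉ y := (List.nodup_cons.mp hnjy).1
      have hny : y.Nodup := (List.nodup_cons.mp hnjy).2
      have hjx : j ∉ x := by
        have hdis := (List.nodup_append'.mp hnd₁).2.2
        intro hc
        exact hdis hc ((List.mem_cons_self (a := j) (l := y)))
      have hjt₂ : j ∉ t₂ := (List.nodup_cons.mp hnd₂).1
      have hjsrc : isSource B j := had₂.1
      have hpn := adapted_prefix_nonadj x B hnx hjx had₁ hjsrc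
      have hnon : ∀ u ∈ x, B u j = 0 ∧ B j u = 0 ∧ A u j = 0 ∧ A j u = 0 := by
        intro u hu
        have h0 := hpn u hu
        have huj : u ≠ j := fun hc => hjx (hc ▸ hu)
        have hAz := hRA u j huj (by
          have := hadj u j (List.mem_append.mpr (Or.inl hu)) hj1 huj
          omega)
        exact ⟨h0.1, h0.2, hAz.1, hAz.2⟩
      have hmv := adapted_move_front A x B hnx hjx hnon had₁
      have had₁' : AdaptedTo (reflQ B j) (x ++ y) := hmv.1.2
      have hsub : (x ++ y).Sublist (x ++ j :: y) :=
        List.Sublist.append_left (List.sublist_cons_self j y) x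
      have hnxy : (x ++ y).Nodup := hnd₁.sublist hsub
      have hmem' : ∀ v, v ∈ x ++ y ↔ v ∈ t₂ := by
        intro v
        constructor
        · intro hv
          have hve : v ∈ x ++ j :: y := hsub.mem hv
          have := (hmem v).mp hve
          rcases List.mem_cons.mp this with rfl | h
          · exfalso
            rcases List.mem_append.mp hv with h' | h'
            · exact hjx h'
            · exact hjy h'
          · exact h
        · intro hv
          have hvne : v ≠ j := fun hc => hjt₂ (hc ▸ hv)
          have := (hmem v).mpr (List.mem_cons_of_mem j hv)
          rcases List.mem_append.mp this with h | h
          · exact List.mem_append.mpr (Or.inl h)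
          · rcases List.mem_cons.mp h with hc | h'
            · exact absurd hc hvne
            · exact List.mem_append.mpr (Or.inr h')
      have hadj' : ∀ u v, u ∈ x ++ y → v ∈ x ++ y → u ≠ v →
          reflQ B j u v + reflQ B j v u = R u v + R v u := by
        intro u v hu hv huv
        rw [reflQ_adj_sum]
        exact hadj u v (hsub.mem hu) (hsub.mem hv) huv
      have hihe := ih (x ++ y) (reflQ B j) hadj' hnxy
        (List.nodup_cons.mp hnd₂).2 hmem' had₁' had₂.2
      rw [hmv.2]
      funext v
      rw [wact_cons, wact_cons, hihe]

end CLAux5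

section CLAux6

variable {n : ℕ}

/-- pullback of a vector along an involution of the vertices -/
def Pmap (st : Fin n → Fin n) (v : Fin n → ℤ) : Fin n → ℤ := fun k => v (st k)

lemma Pmap_Pmap {st : Fin n → Fin n} (hst : ∀ i, st (st i) = i) (v : Fin n → ℤ) :
    Pmap st (Pmap st v) = v := by
  funext k; simp [Pmap, hst]

lemma pairA_star {A : Fin n → Fin n → ℤ} {st : Fin n → Fin n}
    (hst : ∀ i, st (st i) = i) (hAst : ∀ i j, A (st i) (st j) = A i j)
    (i : Fin n) (v : Fin n → ℤ) :
    pairA A (st i) (Pmap st v) = pairA A i v := by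
  unfold pairA Pmap
  rw [← Equiv.sum_comp (Function.Involutive.toPerm st hst) (fun j => A (st i) j * v (st j))]
  exact Finset.sum_congr rfl fun j _ => by
    simp [Function.Involutive.toPerm, hAst, hst]

lemma sref_star {A : Fin n → Fin n → ℤ} {st : Fin n → Fin n}
    (hst : ∀ i, st (st i) = i) (hAst : ∀ i j, A (st i) (st j) = A i j)
    (i : Fin n) (v : Fin n → ℤ) :
    sref A (st i) (Pmap st v) = Pmap st (sref A i v) := by
  funext k
  have hiff : (k = st i) ↔ (st k = i) := by
    constructor
    · rintro rfl; exact hst i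
    · intro hh; rw [← hh, hst]
  show sref A (st i) (Pmap st v) k = sref A i v (st k)
  rw [sref_apply, sref_apply, pairA_star hst hAst]
  show Pmap st v k - _ = v (st k) - _
  rw [show Pmap st v k = v (st k) from rfl]
  by_cases hk : k = st i
  · rw [if_pos hk, if_pos (hiff.mp hk)]
  · rw [if_neg hk, if_neg (fun hc => hk (hiff.mpr hc))]

lemma wact_star {A : Fin n → Fin n → ℤ} {st : Fin n → Fin n}
    (hst : ∀ i, st (st i) = i) (hAst : ∀ i j, A (st i) (st j) = A i j)
    (m : List (Fin n)) (v : Fin n → ℤ) :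
    wact A (m.map st) (Pmap st v) = Pmap st (wact A m v) := by
  induction m generalizing v with
  | nil => rfl
  | cons i t ih =>
      rw [List.map_cons, wact_cons, wact_cons, ih, sref_star hst hAst]

lemma adapted_star {st : Fin n → Fin n} (hst : ∀ i, st (st i) = i)
    (m : List (Fin n)) :
    ∀ (B : Fin n → Fin n → ℕ), AdaptedTo B m →
    AdaptedTo (fun a b => B (st a) (st b)) (m.map st) := by
  induction m with
  | nil => intro B _; exact trivial
  | cons i t ih =>
      intro B h
      rw [List.map_cons, adapted_cons]
      constructor
      · intro j
        show B (st j) (st (st i)) = 0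
        rw [hst]
        exact h.1 (st j)
      · have heq : reflQ (fun a b => B (st a) (st b)) (st i)
            = fun a b => reflQ B i (st a) (st b) := by
          funext a b
          unfold reflQ
          have h1 : (a = st i) ↔ (st a = i) := by
            constructor
            · rintro rfl; exact hst i
            · intro hh; rw [← hh, hst]
          have h2 : (b = st i) ↔ (st b = i) := by
            constructor
            · rintro rfl; exact hst i
            · intro hh; rw [← hh, hst]
          have hcond : (a = st i ∨ b = st i) ↔ (st a = i ∨ st b = i) := by
            rw [h1, h2]
          by_cases hc : st a = i ∨ st b = i
          · rw [if_pos (hcond.mpr hc), if_pos hc]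
          · rw [if_neg (fun hh => hc (hcond.mp hh)), if_neg hc]
        rw [heq]
        exact ih (reflQ B i) h.2

/-- conjugation of the Coxeter word along an adapted word -/
lemma wact_flip_conj (A : Fin n → Fin n → ℤ) (R : Fin n → Fin n → ℕ)
    (hRA : ∀ u v : Fin n, u ≠ v → R u v + R v u = 0 → A u v = 0 ∧ A v u = 0)
    (hA2 : ∀ i, A i i = 2) :
    ∀ (l : List (Fin n)) (B : Fin n → Fin n → ℕ) (η : Fin n → ℤ),
    HtAdapted η B → (∀ u v : Fin n, u ≠ v → B u v + B v u = R u v + R v u) →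
    AdaptedTo B l →
    ∀ e e', IsEnumOn Finset.univ B e → IsEnumOn Finset.univ (flipQ B l) e' →
    ∀ v, wact A e' v = wact A l.reverse (wact A e (wact A l v)) := by
  intro l
  induction l with
  | nil =>
      intro B η hη hBadj _ e e' he he'
      have : wact A e' = wact A e := by
        refine wact_enum_unique A R hRA e e' B ?_ he'.1 he.1
          (fun v => by rw [he'.2.1 v, he.2.1 v]) he'.2.2 he.2.2
        intro u v hu hv huv
        exact hBadj u v huv
      intro v
      rw [this]
      rfl
  | cons i t ih =>
      intro B η hη hBadj had e e' he he'
      rw [adapted_cons] at had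
      set B1 := reflQ B i with hB1
      have hη1 : HtAdapted (fun v => if v = i then η v - 2 else η v) B1 :=
        htAdapted_reflQ hη had.1
      have hB1adj : ∀ u v : Fin n, u ≠ v → B1 u v + B1 v u = R u v + R v u := by
        intro u v huv
        rw [hB1, reflQ_adj_sum]
        exact hBadj u v huv
      -- an enumeration of B1
      obtain ⟨e₁, he₁⟩ := exists_enum (Finset.univ.card) Finset.univ B1
        (fun v => if v = i then η v - 2 else η v) le_rfl hη1
        (fun v _ k _ => Finset.mem_univ k)
      -- an enumeration of B1 on univ.erase i
      obtain ⟨r, hr⟩ := exists_enum (Finset.univ.card) (Finset.univ.erase i) B1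
        (fun v => if v = i then η v - 2 else η v)
        (le_trans (Finset.card_le_card (Finset.erase_subset i Finset.univ)) le_rfl) hη1
        (by
          intro v hv k hk
          refine Finset.mem_erase.mpr ⟨?_, Finset.mem_univ k⟩
          intro hki
          apply hk
          show B1 k v = 0
          rw [hki, hB1]
          show reflQ B i i v = 0
          simp [reflQ, had.1 v])
      have hir : i ∉ r := fun hc => (Finset.notMem_erase i Finset.univ) ((hr.2.1 i).mp hc)
      have hmemr : ∀ v, v ≠ i → v ∈ r := fun v hv =>
        (hr.2.1 v).mpr (Finset.mem_erase.mpr ⟨hv, Finset.mem_univ v⟩)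
      -- i-fronted enumeration of B
      have heB : IsEnumOn Finset.univ B (i :: r) := by
        refine ⟨List.nodup_cons.mpr ⟨hir, hr.1⟩, ?_, had.1, hr.2.2⟩
        intro v
        simp only [List.mem_cons, Finset.mem_univ, iff_true]
        rcases eq_or_ne v i with rfl | hv
        · exact Or.inl rfl
        · exact Or.inr (hmemr v hv)
      -- i-backed enumeration of B1
      have heB1 : IsEnumOn Finset.univ B1 (r ++ [i]) := by
        refine ⟨?_, ?_, ?_⟩
        · rw [List.nodup_append']
          exact ⟨hr.1, List.nodup_singleton i, by
            intro a ha hb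
            rw [List.mem_singleton] at hb
            exact hir (hb ▸ ha)⟩
        · intro v
          simp only [List.mem_append, List.mem_singleton, Finset.mem_univ, iff_true]
          rcases eq_or_ne v i with rfl | hv
          · exact Or.inr rfl
          · exact Or.inl (hmemr v hv)
        · rw [adapted_append]
          refine ⟨hr.2.2, ?_, trivial⟩
          intro k
          rw [flipQ_eq_parity]
          by_cases hk : k = i
          · subst hk
            have h0 : r.count k = 0 := List.count_eq_zero.mpr hir
            rw [h0]
            simp only [Nat.add_zero, Nat.zero_mod, if_pos rfl]
            show reflQ B k k k = 0
            simp [reflQ, had.1 k]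
          · have hc1 : r.count k = 1 := List.count_eq_one_of_mem hr.1 (hmemr k hk)
            have hc2 : r.count i = 0 := List.count_eq_zero.mpr hir
            rw [hc1, hc2]
            norm_num
            show reflQ B i i k = 0
            simp [reflQ, had.1 k]
      -- transfer given enumerations to the constructed ones
      have hwe : wact A e = wact A (i :: r) := by
        refine wact_enum_unique A R hRA (i :: r) e B ?_ he.1 heB.1
          (fun v => by rw [he.2.1 v, heB.2.1 v]) he.2.2 heB.2.2
        intro u v _ _ huv
        exact hBadj u v huv
      have hwe1 : wact A e₁ = wact A (r ++ [i]) := by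
        refine wact_enum_unique A R hRA (r ++ [i]) e₁ B1 ?_ he₁.1 heB1.1
          (fun v => by rw [he₁.2.1 v, heB1.2.1 v]) he₁.2.2 heB1.2.2
        intro u v _ _ huv
        exact hB1adj u v huv
      -- the one-step conjugation
      have hconj : ∀ v, wact A e₁ v = sref A i (wact A e (sref A i v)) := by
        intro v
        have h1 : wact A (i :: r) = wact A e := hwe.symm
        have h2 : ∀ w, wact A r w = sref A i (wact A e w) := by
          intro w
          have := congrFun h1 w
          rw [wact_cons] at this
          have := congrArg (sref A i) this
          rwa [sref_sref A hA2] at this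
        rw [hwe1, wact_append, wact_one, h2]
      -- conclude by the induction hypothesis
      have hihe := ih B1 (fun v => if v = i then η v - 2 else η v) hη1 hB1adj had.2
        e₁ e' he₁ (by rw [flipQ_cons, ← hB1] at he'; exact he')
      intro v
      rw [hihe v, hconj]
      rw [List.reverse_cons, wact_append, wact_one, wact_cons]
end CLAux6

section CLAux7

variable {n : ℕ}

lemma wact_single_evol (A : Fin n → Fin n → ℤ)
    (hAoff : ∀ u k : Fin n, u ≠ k → A u k ≤ 0) (j : Fin n) :
    ∀ (y : List (Fin n)), y.Nodup → j ∉ y →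
    (∀ k, 0 ≤ wact A y (Pi.single j 1) k) ∧ (wact A y (Pi.single j 1) j = 1) ∧
    (∀ w ∈ y, -A w j ≤ wact A y (Pi.single j 1) w) := by
  intro y
  induction y with
  | nil =>
      intro _ _
      refine ⟨fun k => ?_, by rw [wact_nil]; simp, fun w hw => absurd hw ((List.not_mem_nil (a := w)))⟩
      rw [wact_nil]
      by_cases hk : k = j
      · simp [Pi.single_apply, hk]
      · simp [Pi.single_apply, hk]
  | cons u t ih =>
      intro hnd hjy
      have hut : u ∉ t := (List.nodup_cons.mp hnd).1
      have huj : u ≠ j := fun hc => hjy (hc ▸ (List.mem_cons_self (a := u) (l := t)))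
      have hjt : j ∉ t := fun hc => hjy (List.mem_cons_of_mem u hc)
      obtain ⟨h1, h2, h3⟩ := ih (List.nodup_cons.mp hnd).2 hjt
      set v' := wact A t (Pi.single j 1) with hv'
      have hvu : v' u = 0 := by
        rw [hv', wact_apply_of_not_mem A hut]
        simp [Pi.single_apply, huj]
      have hterm : ∀ k, 0 ≤ -(A u k * v' k) := by
        intro k
        rcases eq_or_ne k u with rfl | hku
        · rw [hvu]; simp
        · have := hAoff u k (Ne.symm hku)
          have := h1 k
          nlinarith
      have hcoordu : wact A (u :: t) (Pi.single j 1) u = ∑ k, -(A u k * v' k) := by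
        rw [wact_cons, sref_apply, if_pos rfl, ← hv', hvu]
        unfold pairA
        rw [Finset.sum_neg_distrib]
        ring
      refine ⟨?_, ?_, ?_⟩
      · intro k
        rcases eq_or_ne k u with rfl | hku
        · rw [hcoordu]
          exact Finset.sum_nonneg fun k _ => hterm k
        · rw [wact_cons, sref_apply_ne A hku, ← hv']
          exact h1 k
      · rw [wact_cons, sref_apply_ne A (Ne.symm huj), ← hv']
        exact h2
      · intro w hw
        rcases List.mem_cons.mp hw with rfl | hwt
        · rw [hcoordu]
          calc -A w j = -(A w j * v' j) := by rw [h2]; ring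
            _ ≤ ∑ k, -(A w k * v' k) :=
              Finset.single_le_sum (fun k _ => hterm k) (Finset.mem_univ j)
        · have hwu : w ≠ u := fun hc => hut (hc ▸ hwt)
          rw [wact_cons, sref_apply_ne A hwu, ← hv']
          exact h3 w hwt

/-- the coordinate of a vertex after a full adapted sweep detects sinks -/
lemma detect_coord (A : Fin n → Fin n → ℤ) (hA2 : ∀ i, A i i = 2)
    (hAoff : ∀ u k : Fin n, u ≠ k → A u k ≤ 0) (hsym : ∀ i j, A i j = A j i)
    {s : Finset (Fin n)} {B : Fin n → Fin n → ℕ} {η : Fin n → ℤ} {e : List (Fin n)}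
    (hBA : ∀ u v, u ∈ s → v ∈ s → u ≠ v → A u v = -((B u v : ℤ) + (B v u : ℤ)))
    (hη : HtAdapted η B)
    (hsupp : ∀ a b, B a b ≠ 0 → a ∈ s ∧ b ∈ s)
    (he : IsEnumOn s B e) {j : Fin n} (hj : j ∈ s) :
    ((∀ k, B j k = 0) → wact A e (Pi.single j 1) j = -1) ∧
    (∀ w, B j w ≠ 0 → 0 ≤ wact A e (Pi.single j 1) j) := by
  obtain ⟨hnd, hmem, had⟩ := he
  have hje : j ∈ e := (hmem j).mpr hj
  obtain ⟨x, y, hxy⟩ := List.append_of_mem hje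
  subst hxy
  have hnx : x.Nodup := hnd.of_append_left
  have hnjy : (j :: y).Nodup := hnd.of_append_right
  have hjy : j ∉ y := (List.nodup_cons.mp hnjy).1
  have hny : y.Nodup := (List.nodup_cons.mp hnjy).2
  have hjx : j ∉ x := by
    have hdis := (List.nodup_append'.mp hnd).2.2
    intro hc
    exact hdis hc ((List.mem_cons_self (a := j) (l := y)))
  obtain ⟨h1, h2, h3⟩ := wact_single_evol A hAoff j y hny hjy
  set v' := wact A y (Pi.single j 1) with hv'
  -- the value of the j-th coordinate
  have hval : wact A (x ++ j :: y) (Pi.single j 1) j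
      = -1 + ∑ k ∈ Finset.univ.erase j, -(A j k * v' k) := by
    rw [wact_append, wact_apply_of_not_mem A hjx, wact_cons, sref_apply, if_pos rfl, ← hv']
    unfold pairA
    rw [h2]
    have hsplit : (∑ k, A j k * v' k)
        = A j j * v' j + ∑ k ∈ Finset.univ.erase j, A j k * v' k :=
      (Finset.add_sum_erase Finset.univ (fun k => A j k * v' k) (Finset.mem_univ j)).symm
    rw [hsplit, hA2, h2, Finset.sum_neg_distrib]
    ring
  -- any vertex reflected in `y` lies in `s`
  have hymem : ∀ k ∈ y, k ∈ s := by
    intro k hk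
    exact (hmem k).mp (List.mem_append.mpr (Or.inr (List.mem_cons_of_mem j hk)))
  -- vertices not in `y ∪ {j}` have zero coordinate
  have hcoordzero : ∀ k, k ∉ y → k ≠ j → v' k = 0 := by
    intro k hky hkj
    rw [hv', wact_apply_of_not_mem A hky]
    simp [Pi.single_apply, hkj]
  -- a vertex k in `y` with an arrow `k → j` contradicts adaptedness
  have hnoarrow : ∀ k ∈ y, B k j = 0 := by
    intro k hk
    by_contra hBc
    obtain ⟨y₁, y₂, rfl⟩ := List.append_of_mem hk
    have hre : x ++ j :: (y₁ ++ k :: y₂) = (x ++ j :: y₁) ++ k :: y₂ := by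
      simp [List.append_assoc]
    rw [hre, adapted_append] at had
    have hsrc := had.2.1
    have hcjx : (x ++ j :: y₁).count j = 1 := by
      rw [List.count_append, List.count_cons_self, List.count_eq_zero.mpr hjx]
      have hjy₁ : j ∉ y₁ := fun hc => hjy (List.mem_append.mpr (Or.inl hc))
      rw [List.count_eq_zero.mpr hjy₁]
    have hkx : k ∉ x := by
      have hdis := (List.nodup_append'.mp hnd).2.2
      intro hc
      exact hdis hc (List.mem_cons_of_mem j hk)
    have hkj' : k ≠ j := by
      rintro rfl
      exact hjy hk
    have hky₁ : k ∉ y₁ := by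
      have := hny
      rw [List.nodup_append'] at this
      have hnky₂ := this.2.1
      exact fun hc => (List.nodup_cons.mp hnky₂).1 (absurd hc (by
        intro hcc
        exact (List.disjoint_right.mp this.2.2 ((List.mem_cons_self (a := k) (l := y₂)))) hcc))
    have hck : (x ++ j :: y₁).count k = 0 := by
      rw [List.count_append, List.count_eq_zero.mpr hkx, List.count_cons_of_ne (Ne.symm hkj'),
        List.count_eq_zero.mpr hky₁]
    have hsj := hsrc j
    rw [flipQ_eq_parity, hcjx, hck] at hsj
    norm_num at hsj
    exact hBc hsj
  constructor
  · -- sink case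
    intro hsink
    rw [hval]
    have hzero : ∀ k ∈ Finset.univ.erase j, -(A j k * v' k) = 0 := by
      intro k hk
      have hkj : k ≠ j := Finset.ne_of_mem_erase hk
      by_cases hky : k ∈ y
      · have hAjk : A j k = 0 := by
          rw [hBA j k hj (hymem k hky) (Ne.symm hkj), hsink k, hnoarrow k hky]
          norm_num
        rw [hAjk]; ring
      · rw [hcoordzero k hky hkj]; ring
    rw [Finset.sum_congr rfl hzero]
    simp
  · -- non-sink case
    intro w hw
    rw [hval]
    have hwj : w ≠ j := by
      rintro rfl
      exact hw (htAdapted_no_loop hη w)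
    have hws : w ∈ s := (hsupp j w hw).2
    -- w must lie in y
    have hwy : w ∈ y := by
      have hwe : w ∈ x ++ j :: y := (hmem w).mpr hws
      rcases List.mem_append.mp hwe with hwx | hwjy
      · exfalso
        obtain ⟨x₁, x₂, rfl⟩ := List.append_of_mem hwx
        have hre : (x₁ ++ w :: x₂) ++ j :: y = x₁ ++ w :: (x₂ ++ j :: y) := by
          simp [List.append_assoc]
        rw [hre, adapted_append] at had
        have hsrc := had.2.1
        have hjx₁ : j ∉ x₁ := fun hc => hjx (List.mem_append.mpr (Or.inl hc))
        have hwx₁ : w ∉ x₁ := by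
          have := hnx
          rw [List.nodup_append'] at this
          exact fun hc => (List.disjoint_left.mp this.2.2 hc) ((List.mem_cons_self (a := w) (l := x₂)))
        have hcj : x₁.count j = 0 := List.count_eq_zero.mpr hjx₁
        have hcw : x₁.count w = 0 := List.count_eq_zero.mpr hwx₁
        have := hsrc j
        rw [flipQ_eq_parity, hcj, hcw] at this
        norm_num at this
        exact hw this
      · rcases List.mem_cons.mp hwjy with hc | hc
        · exact absurd hc hwj
        · exact hc
    have hterm : ∀ k ∈ Finset.univ.erase j, 0 ≤ -(A j k * v' k) := by
      intro k hk
      have hkj : k ≠ j := Finset.ne_of_mem_erase hk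
      have := hAoff j k (Ne.symm hkj)
      have := h1 k
      nlinarith
    have hAc : (1 : ℤ) ≤ -A j w := by
      rw [hBA j w hj hws (Ne.symm hwj)]
      have : 1 ≤ B j w := Nat.one_le_iff_ne_zero.mpr hw
      push_cast
      omega
    have hvw : (1 : ℤ) ≤ v' w := by
      have := h3 w hwy
      rw [hsym w j] at this
      omega
    have hsingle : -(A j w * v' w) ≤ ∑ k ∈ Finset.univ.erase j, -(A j k * v' k) :=
      Finset.single_le_sum hterm (Finset.mem_erase.mpr ⟨hwj, Finset.mem_univ w⟩)
    nlinarith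

end CLAux7

section CLAux8

variable {n : ℕ}

/-- remove all edges at a vertex -/
def zeroAt (j : Fin n) (B : Fin n → Fin n → ℕ) : Fin n → Fin n → ℕ :=
  fun a b => if a = j ∨ b = j then 0 else B a b

lemma reflQ_zeroAt (B : Fin n → Fin n → ℕ) {j u : Fin n} (hu : u ≠ j) :
    reflQ (zeroAt j B) u = zeroAt j (reflQ B u) := by
  funext a b
  show (if a = u ∨ b = u then zeroAt j B b a else zeroAt j B a b)
      = if a = j ∨ b = j then 0 else reflQ B u a b
  by_cases hj : a = j ∨ b = j
  · have hj' : b = j ∨ a = j := hj.symm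
    rw [if_pos hj]
    by_cases hc : a = u ∨ b = u
    · rw [if_pos hc]
      show (if b = j ∨ a = j then 0 else B b a) = 0
      rw [if_pos hj']
    · rw [if_neg hc]
      show (if a = j ∨ b = j then 0 else B a b) = 0
      rw [if_pos hj]
  · push_neg at hj
    rw [if_neg (not_or.mpr hj)]
    show _ = reflQ B u a b
    by_cases hc : a = u ∨ b = u
    · rw [if_pos hc]
      show (if b = j ∨ a = j then 0 else B b a) = reflQ B u a b
      rw [if_neg (not_or.mpr ⟨hj.2, hj.1⟩)]
      show B b a = reflQ B u a b
      unfold reflQ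
      rw [if_pos hc]
    · rw [if_neg hc]
      show (if a = j ∨ b = j then 0 else B a b) = reflQ B u a b
      rw [if_neg (not_or.mpr hj)]
      unfold reflQ
      rw [if_neg hc]

lemma adapted_zeroAt_iff (j : Fin n) :
    ∀ (r : List (Fin n)) (B : Fin n → Fin n → ℕ), r.Nodup → j ∉ r →
    (∀ k ∈ r, B j k = 0) →
    (AdaptedTo (zeroAt j B) r ↔ AdaptedTo B r) := by
  intro r
  induction r with
  | nil => intro B _ _ _; exact Iff.rfl
  | cons u t ih =>
      intro B hnd hjr hz
      have huj : u ≠ j := fun hc => hjr (hc ▸ (List.mem_cons_self (a := u) (l := t)))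
      have hut : u ∉ t := (List.nodup_cons.mp hnd).1
      rw [adapted_cons, adapted_cons]
      have hsrc : isSource (zeroAt j B) u ↔ isSource B u := by
        constructor
        · intro h k
          rcases eq_or_ne k j with rfl | hkj
          · exact hz u ((List.mem_cons_self (a := u) (l := t)))
          · have := h k
            show B k u = 0
            rwa [zeroAt, if_neg (not_or.mpr ⟨hkj, huj⟩)] at this
        · intro h k
          show zeroAt j B k u = 0
          rcases eq_or_ne k j with rfl | hkj
          · rw [zeroAt, if_pos (Or.inl rfl)]
          · rw [zeroAt, if_neg (not_or.mpr ⟨hkj, huj⟩)]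
            exact h k
      rw [reflQ_zeroAt B huj]
      have htail := ih (reflQ B u) (List.nodup_cons.mp hnd).2
        (fun hc => hjr (List.mem_cons_of_mem u hc))
        (by
          intro k hk
          have hku : k ≠ u := fun hc => hut (hc ▸ hk)
          show reflQ B u j k = 0
          unfold reflQ
          rw [if_neg (not_or.mpr ⟨Ne.symm huj, hku⟩)]
          exact hz k (List.mem_cons_of_mem u hk))
      rw [htail, hsrc]

lemma quiver_unique (A : Fin n → Fin n → ℤ) (R : Fin n → Fin n → ℕ)
    (hRA' : ∀ u v : Fin n, u ≠ v → A u v = -((R u v : ℤ) + (R v u : ℤ)))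
    (hA2 : ∀ i, A i i = 2) (hAoff : ∀ u k : Fin n, u ≠ k → A u k ≤ 0)
    (hsym : ∀ i j, A i j = A j i) :
    ∀ (N : ℕ) (s : Finset (Fin n)) (B B' : Fin n → Fin n → ℕ) (η η' : Fin n → ℤ),
    s.card ≤ N →
    (∀ a b, B a b ≠ 0 → a ∈ s ∧ b ∈ s) → (∀ a b, B' a b ≠ 0 → a ∈ s ∧ b ∈ s) →
    (∀ u v, u ∈ s → v ∈ s → u ≠ v → B u v + B v u = R u v + R v u) →
    (∀ u v, u ∈ s → v ∈ s → u ≠ v → B' u v + B' v u = R u v + R v u) →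
    HtAdapted η B → HtAdapted η' B' →
    ∀ e e', IsEnumOn s B e → IsEnumOn s B' e' → wact A e = wact A e' → B = B' := by
  intro N
  induction N with
  | zero =>
      intro s B B' η η' hcard hsupp hsupp' _ _ _ _ _ _ _ _ _
      have hs : s = ∅ := Finset.card_eq_zero.mp (Nat.le_zero.mp hcard)
      subst hs
      funext a b
      by_cases hB : B a b = 0
      · by_cases hB' : B' a b = 0
        · rw [hB, hB']
        · exact absurd (hsupp' a b hB').1 (Finset.notMem_empty a)
      · exact absurd (hsupp a b hB).1 (Finset.notMem_empty a)
  | succ N ih =>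
      intro s B B' η η' hcard hsupp hsupp' hadjR hadjR' hη hη' e e' he he' hw
      rcases s.eq_empty_or_nonempty with rfl | hs
      · funext a b
        by_cases hB : B a b = 0
        · by_cases hB' : B' a b = 0
          · rw [hB, hB']
          · exact absurd (hsupp' a b hB').1 (Finset.notMem_empty a)
        · exact absurd (hsupp a b hB).1 (Finset.notMem_empty a)
      · obtain ⟨j, hj, hjmin⟩ := s.exists_min_image η hs
        have hBA : ∀ u v, u ∈ s → v ∈ s → u ≠ v → A u v = -((B u v : ℤ) + (B v u : ℤ)) := by
          intro u v hu hv huv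
          rw [hRA' u v huv]
          have := hadjR u v hu hv huv
          push_cast
          omega
        have hBA' : ∀ u v, u ∈ s → v ∈ s → u ≠ v → A u v = -((B' u v : ℤ) + (B' v u : ℤ)) := by
          intro u v hu hv huv
          rw [hRA' u v huv]
          have := hadjR' u v hu hv huv
          push_cast
          omega
        have hsink : ∀ k, B j k = 0 := by
          intro k
          by_contra hc
          have hks : k ∈ s := (hsupp j k hc).2
          have := hη j k hc
          have := hjmin k hks
          omega
        have hsink' : ∀ k, B' j k = 0 := by
          intro k
          by_contra hc
          push_neg at hc
          have hd := (detect_coord A hA2 hAoff hsym hBA hη hsupp he hj).1 hsink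
          have hd' := (detect_coord A hA2 hAoff hsym hBA' hη' hsupp' he' hj).2 k hc
          rw [hw] at hd
          omega
        -- zeroed quivers and enumerations
        have hcard' : (s.erase j).card ≤ N := by
          have := Finset.card_erase_of_mem hj
          omega
        have hsupp₁ : ∀ a b, zeroAt j B a b ≠ 0 → a ∈ s.erase j ∧ b ∈ s.erase j := by
          intro a b hab
          unfold zeroAt at hab
          by_cases hc : a = j ∨ b = j
          · rw [if_pos hc] at hab; exact absurd rfl hab
          · rw [if_neg hc] at hab
            push_neg at hc
            exact ⟨Finset.mem_erase.mpr ⟨hc.1, (hsupp a b hab).1⟩,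
              Finset.mem_erase.mpr ⟨hc.2, (hsupp a b hab).2⟩⟩
        have hsupp₁' : ∀ a b, zeroAt j B' a b ≠ 0 → a ∈ s.erase j ∧ b ∈ s.erase j := by
          intro a b hab
          unfold zeroAt at hab
          by_cases hc : a = j ∨ b = j
          · rw [if_pos hc] at hab; exact absurd rfl hab
          · rw [if_neg hc] at hab
            push_neg at hc
            exact ⟨Finset.mem_erase.mpr ⟨hc.1, (hsupp' a b hab).1⟩,
              Finset.mem_erase.mpr ⟨hc.2, (hsupp' a b hab).2⟩⟩
        have hη₁ : HtAdapted η (zeroAt j B) := by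
          intro a b hab
          unfold zeroAt at hab
          by_cases hc : a = j ∨ b = j
          · rw [if_pos hc] at hab; exact absurd rfl hab
          · rw [if_neg hc] at hab; exact hη a b hab
        have hη₁' : HtAdapted η' (zeroAt j B') := by
          intro a b hab
          unfold zeroAt at hab
          by_cases hc : a = j ∨ b = j
          · rw [if_pos hc] at hab; exact absurd rfl hab
          · rw [if_neg hc] at hab; exact hη' a b hab
        obtain ⟨e₁, he₁⟩ := exists_enum (s.erase j).card (s.erase j) (zeroAt j B) η
          le_rfl hη₁ (fun v hv k hk => (hsupp₁ k v hk).1)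
        obtain ⟨e₁', he₁'⟩ := exists_enum (s.erase j).card (s.erase j) (zeroAt j B') η'
          le_rfl hη₁' (fun v hv k hk => (hsupp₁' k v hk).1)
        -- the big enumerations e₁ ++ [j]
        have hbigenum : ∀ (C : Fin n → Fin n → ℕ) (f : List (Fin n)),
            (∀ k, C j k = 0) → (∀ a b, C a b ≠ 0 → a ∈ s ∧ b ∈ s) →
            IsEnumOn (s.erase j) (zeroAt j C) f → IsEnumOn s C (f ++ [j]) := by
          intro C f hsk hsuppC hf
          have hjf : j ∉ f := fun hc => (Finset.notMem_erase j s) ((hf.2.1 j).mp hc)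
          refine ⟨?_, ?_, ?_⟩
          · rw [List.nodup_append']
            exact ⟨hf.1, List.nodup_singleton j, by
              intro a ha hb
              rw [List.mem_singleton] at hb
              exact hjf (hb ▸ ha)⟩
          · intro v
            simp only [List.mem_append, List.mem_singleton]
            constructor
            · rintro (hv | rfl)
              · exact Finset.mem_of_mem_erase ((hf.2.1 v).mp hv)
              · exact hj
            · intro hv
              rcases eq_or_ne v j with rfl | hvj
              · exact Or.inr rfl
              · exact Or.inl ((hf.2.1 v).mpr (Finset.mem_erase.mpr ⟨hvj, hv⟩))
          · rw [adapted_append]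
            have hzf : ∀ k ∈ f, C j k = 0 := fun k _ => hsk k
            refine ⟨(adapted_zeroAt_iff j f C hf.1 hjf hzf).mp hf.2.2, ?_, trivial⟩
            intro k
            rw [flipQ_eq_parity]
            have hcj : f.count j = 0 := List.count_eq_zero.mpr hjf
            by_cases hkf : k ∈ f
            · have hck : f.count k = 1 := List.count_eq_one_of_mem hf.1 hkf
              rw [hck, hcj]
              norm_num
              exact hsk k
            · have hck : f.count k = 0 := List.count_eq_zero.mpr hkf
              rw [hck, hcj]
              norm_num
              by_contra hc
              have hkin := (hsuppC k j hc).1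
              rcases eq_or_ne k j with rfl | hkj
              · exact hc (hsk k)
              · exact hkf ((hf.2.1 k).mpr (Finset.mem_erase.mpr ⟨hkj, hkin⟩))
        have hE := hbigenum B e₁ hsink hsupp he₁
        have hE' := hbigenum B' e₁' hsink' hsupp' he₁'
        -- transfer the given wact equality
        have hRA : ∀ u v : Fin n, u ≠ v → R u v + R v u = 0 → A u v = 0 ∧ A v u = 0 := by
          intro u v huv h0
          constructor
          · rw [hRA' u v huv]; push_cast; omega
          · rw [hRA' v u (Ne.symm huv)]; push_cast; omega
        have hwE : wact A (e₁ ++ [j]) = wact A e := by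
          refine wact_enum_unique A R hRA e (e₁ ++ [j]) B ?_ hE.1 he.1
            (fun v => by rw [hE.2.1 v, he.2.1 v]) hE.2.2 he.2.2
          intro u v hu hv huv
          exact hadjR u v ((hE.2.1 u).mp hu) ((hE.2.1 v).mp hv) huv
        have hwE' : wact A (e₁' ++ [j]) = wact A e' := by
          refine wact_enum_unique A R hRA e' (e₁' ++ [j]) B' ?_ hE'.1 he'.1
            (fun v => by rw [hE'.2.1 v, he'.2.1 v]) hE'.2.2 he'.2.2
          intro u v hu hv huv
          exact hadjR' u v ((hE'.2.1 u).mp hu) ((hE'.2.1 v).mp hv) huv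
        have hw1 : wact A e₁ = wact A e₁' := by
          funext v
          have h0 : wact A (e₁ ++ [j]) (sref A j v) = wact A (e₁' ++ [j]) (sref A j v) := by
            rw [hwE, hwE', hw]
          rw [wact_append, wact_append, wact_one, sref_sref A hA2] at h0
          exact h0
        -- inductive step
        have hadjR₁ : ∀ u v, u ∈ s.erase j → v ∈ s.erase j → u ≠ v →
            zeroAt j B u v + zeroAt j B v u = R u v + R v u := by
          intro u v hu hv huv
          have huj := Finset.ne_of_mem_erase hu
          have hvj := Finset.ne_of_mem_erase hv
          show (if u = j ∨ v = j then 0 else B u v) + (if v = j ∨ u = j then 0 else B v u) = _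
          rw [if_neg (not_or.mpr ⟨huj, hvj⟩), if_neg (not_or.mpr ⟨hvj, huj⟩)]
          exact hadjR u v (Finset.mem_of_mem_erase hu) (Finset.mem_of_mem_erase hv) huv
        have hadjR₁' : ∀ u v, u ∈ s.erase j → v ∈ s.erase j → u ≠ v →
            zeroAt j B' u v + zeroAt j B' v u = R u v + R v u := by
          intro u v hu hv huv
          have huj := Finset.ne_of_mem_erase hu
          have hvj := Finset.ne_of_mem_erase hv
          show (if u = j ∨ v = j then 0 else B' u v) + (if v = j ∨ u = j then 0 else B' v u) = _
          rw [if_neg (not_or.mpr ⟨huj, hvj⟩), if_neg (not_or.mpr ⟨hvj, huj⟩)]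
          exact hadjR' u v (Finset.mem_of_mem_erase hu) (Finset.mem_of_mem_erase hv) huv
        have hzeq : zeroAt j B = zeroAt j B' :=
          ih (s.erase j) (zeroAt j B) (zeroAt j B') η η' hcard' hsupp₁ hsupp₁'
            hadjR₁ hadjR₁' hη₁ hη₁' e₁ e₁' he₁ he₁' hw1
        -- conclude
        funext a b
        by_cases haj : a = j
        · rw [haj, hsink b, hsink' b]
        · by_cases hbj : b = j
          · subst hbj
            by_cases has : a ∈ s
            · have h1 := hadjR a b has hj haj
              have h2 := hadjR' a b has hj haj
              have h3 := hsink a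
              have h4 := hsink' a
              omega
            · have h1 : B a b = 0 := by
                by_contra hc
                exact has (hsupp a b hc).1
              have h2 : B' a b = 0 := by
                by_contra hc
                exact has (hsupp' a b hc).1
              rw [h1, h2]
          · have := congrFun (congrFun hzeq a) b
            unfold zeroAt at this
            rwa [if_neg (not_or.mpr ⟨haj, hbj⟩), if_neg (not_or.mpr ⟨haj, hbj⟩)] at this

end CLAux8

section CLAux9

variable {n : ℕ}

lemma wact_zero (A : Fin n → Fin n → ℤ) (m : List (Fin n)) : wact A m 0 = 0 := by
  have h := wact_add A m 0 0
  rw [add_zero] at h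
  have := congrArg (fun w => w - wact A m 0) h
  simpa using this.symm

lemma sref_smul (A : Fin n → Fin n → ℤ) (i : Fin n) (c : ℤ) (v : Fin n → ℤ) :
    sref A i (c • v) = c • sref A i v := by
  funext k
  simp only [sref_apply, Pi.smul_apply, pairA_smul', smul_eq_mul]
  by_cases hk : k = i
  · simp [hk]; ring
  · simp [hk]

lemma wact_smul (A : Fin n → Fin n → ℤ) (m : List (Fin n)) (c : ℤ) (v : Fin n → ℤ) :
    wact A m (c • v) = c • wact A m v := by
  induction m with
  | nil => rfl
  | cons i t ih => simp only [wact_cons, ih, sref_smul]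

lemma wact_sum (A : Fin n → Fin n → ℤ) (m : List (Fin n)) {ι : Type*} (s : Finset ι)
    (g : ι → (Fin n → ℤ)) : wact A m (∑ i ∈ s, g i) = ∑ i ∈ s, wact A m (g i) := by
  classical
  induction s using Finset.induction_on with
  | empty => simpa using wact_zero A m
  | insert _ _ hx ih =>
      rw [Finset.sum_insert hx, Finset.sum_insert hx, wact_add, ih]

lemma wact_sigma (A : Fin n → Fin n → ℤ) {st : Fin n → Fin n}
    (hst : ∀ i, st (st i) = i) (m : List (Fin n))
    (hm : ∀ i, wact A m (Pi.single i 1) = -Pi.single (st i) 1) (v : Fin n → ℤ) :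
    wact A m v = -(Pmap st v) := by
  have hv : v = ∑ i, (v i) • (Pi.single i (1:ℤ)) := by
    funext k
    rw [Finset.sum_apply]
    simp [Pi.single_apply, mul_ite]
  conv_lhs => rw [hv]
  rw [wact_sum]
  have hterm : ∀ i, wact A m ((v i) • Pi.single i (1:ℤ))
      = (v i) • (-(Pi.single (st i) (1:ℤ))) := by
    intro i
    rw [wact_smul, hm i]
  rw [Finset.sum_congr rfl (fun i _ => hterm i)]
  funext k
  rw [Finset.sum_apply]
  have hterm2 : ∀ i ∈ (Finset.univ : Finset (Fin n)),
      ((v i • (-(Pi.single (st i) (1:ℤ)))) : Fin n → ℤ) k = if i = st k then -(v (st k)) else 0 := by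
    intro i _
    rw [Pi.smul_apply, Pi.neg_apply, Pi.single_apply]
    by_cases hi : i = st k
    · have hk : k = st i := by rw [hi, hst]
      rw [if_pos hi, if_pos hk, hi]
      simp
    · have hk : k ≠ st i := fun hc => hi (by rw [hc, hst])
      rw [if_neg hi, if_neg hk]
      simp
  rw [Finset.sum_congr rfl hterm2,
    Finset.sum_ite_eq' Finset.univ (st k) (fun _ => -(v (st k)))]
  simp [Pmap]

end CLAux9

section MainProof

theorem reversed_word_adapted_to_dual' {n : ℕ}
    (arrS : Fin n → Fin n → ℕ) (Tarr : Fin n → Fin n → ℕ)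
    (xiS : Fin n → ℤ) (st : Fin n → Fin n) (l : List (Fin n))
    (hloop : ∀ i, arrS i i = 0)
    (hxi : ∀ i j, arrS i j ≠ 0 → xiS j = xiS i - 1)
    (hstar : ∀ i, st (st i) = i)
    (hw0 : ∀ i, wact (cartan arrS) l (Pi.single i 1) = - Pi.single (st i) 1)
    (hTarr : Tarr = dualArr st arrS)
    (hadapted : AdaptedTo arrS l)
    (hreduced : IsReduced (cartan arrS) l) :
    AdaptedTo Tarr l.reverse ∧
    IsReduced (cartan Tarr) l.reverse ∧
    ∀ i : Fin n, wact (cartan Tarr) l.reverse (Pi.single i 1)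
      = - Pi.single (st i) 1 := by
  set A := cartan arrS with hA
  have hA2 : ∀ i, A i i = 2 := fun i => by simp [hA, cartan]
  have hsym : ∀ i j, A i j = A j i := by
    intro i j
    rcases eq_or_ne i j with rfl | hij
    · rfl
    · simp only [hA, cartan, if_neg hij, if_neg (Ne.symm hij)]
      ring
  have hAoff : ∀ u k : Fin n, u ≠ k → A u k ≤ 0 := by
    intro u k huk
    simp only [hA, cartan, if_neg huk]
    omega
  have hRA' : ∀ u v : Fin n, u ≠ v → A u v = -((arrS u v : ℤ) + (arrS v u : ℤ)) := by
    intro u v huv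
    simp [hA, cartan, if_neg huv]
  have hRA : ∀ u v : Fin n, u ≠ v → arrS u v + arrS v u = 0 → A u v = 0 ∧ A v u = 0 := by
    intro u v huv h0
    constructor
    · rw [hRA' u v huv]; push_cast; omega
    · rw [hRA' v u (Ne.symm huv)]; push_cast; omega
  have hstinj : Function.Injective st := fun a b hab => by
    rw [← hstar a, hab, hstar b]
  -- goal 3 for the base cartan matrix
  have hG3 : ∀ i : Fin n, wact A l.reverse (Pi.single i 1) = -Pi.single (st i) 1 := by
    intro i
    have h1 : wact A l (Pi.single (st i) 1) = -Pi.single i 1 := by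
      rw [hw0 (st i), hstar i]
    calc wact A l.reverse (Pi.single i 1)
        = wact A l.reverse (-(wact A l (Pi.single (st i) 1))) := by rw [h1]; simp
      _ = -(wact A l.reverse (wact A l (Pi.single (st i) 1))) := wact_neg _ _ _
      _ = -Pi.single (st i) 1 := by rw [wact_reverse_left A hA2]
  -- star-invariance of the Cartan matrix
  have hAst : ∀ i j, A (st i) (st j) = A i j := by
    intro i j
    have h1 := bformA_wact A hA2 hsym l (Pi.single i 1) (Pi.single j 1)
    rw [hw0 i, hw0 j, bformA_neg_neg, bformA_single_single, bformA_single_single] at h1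
    exact h1
  have hsums : ∀ a b : Fin n, a ≠ b →
      arrS (st a) (st b) + arrS (st b) (st a) = arrS a b + arrS b a := by
    intro a b hab
    have hab' : st a ≠ st b := fun hc => hab (hstinj hc)
    have h1 := hAst a b
    rw [hRA' (st a) (st b) hab', hRA' a b hab] at h1
    push_cast at h1
    omega
  -- the Cartan matrix of the dual quiver equals the original one
  have hTA : cartan Tarr = A := by
    funext i j
    rcases eq_or_ne i j with rfl | hij
    · simp [cartan, hA]
    · have hij' : st j ≠ st i := fun hc => hij (hstinj hc).symm
      show cartan Tarr i j = cartan arrS i j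
      unfold cartan
      rw [if_neg hij, if_neg hij, hTarr]
      show -((arrS (st j) (st i) : ℤ) + (arrS (st i) (st j) : ℤ)) = _
      have := hsums j i (Ne.symm hij)
      push_cast
      omega
  refine ⟨?_, ?_, ?_⟩
  · -- goal 1 : adaptedness of the reversed word to the dual quiver
    -- heights
    have hQh : HtAdapted xiS arrS := hxi
    set Qs : Fin n → Fin n → ℕ := fun a b => arrS (st a) (st b) with hQs
    have hQsh : HtAdapted (fun v => xiS (st v)) Qs := fun a b hab => hxi _ _ hab
    set Bf : Fin n → Fin n → ℕ := flipQ arrS l with hBf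
    have hBh : HtAdapted (fun v => xiS v - 2 * (l.count v : ℤ)) Bf :=
      htAdapted_flipQ l hQh hadapted
    have hBadj : ∀ u v : Fin n, u ∈ (Finset.univ : Finset (Fin n)) →
        v ∈ (Finset.univ : Finset (Fin n)) → u ≠ v →
        Bf u v + Bf v u = arrS u v + arrS v u := fun u v _ _ _ => flipQ_adj_sum arrS l u v
    have hQsadj : ∀ u v : Fin n, u ∈ (Finset.univ : Finset (Fin n)) →
        v ∈ (Finset.univ : Finset (Fin n)) → u ≠ v →
        Qs u v + Qs v u = arrS u v + arrS v u := fun u v _ _ huv => hsums u v huv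
    -- enumerations
    obtain ⟨e, he⟩ := exists_enum Finset.univ.card Finset.univ arrS xiS le_rfl hQh
      (fun v _ k _ => Finset.mem_univ k)
    obtain ⟨e', he'⟩ := exists_enum Finset.univ.card Finset.univ Bf
      (fun v => xiS v - 2 * (l.count v : ℤ)) le_rfl hBh (fun v _ k _ => Finset.mem_univ k)
    have hestar : IsEnumOn Finset.univ Qs (e.map st) := by
      refine ⟨he.1.map hstinj, ?_, ?_⟩
      · intro v
        simp only [List.mem_map, Finset.mem_univ, iff_true]
        exact ⟨st v, (he.2.1 (st v)).mpr (Finset.mem_univ _), hstar v⟩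
      · exact adapted_star hstar e arrS he.2.2
    -- conjugation identity
    have hconj := wact_flip_conj A arrS hRA hA2 l arrS xiS hQh
      (fun u v _ => rfl) hadapted e e' he he'
    -- identification of the word actions
    have hsl : ∀ v, wact A l v = -(Pmap st v) := wact_sigma A hstar l hw0
    have hslr : ∀ v, wact A l.reverse v = -(Pmap st v) := wact_sigma A hstar l.reverse hG3
    have hPneg : ∀ w : Fin n → ℤ, Pmap st (-w) = -(Pmap st w) := by
      intro w; funext k; simp [Pmap]
    have hmain : wact A e' = wact A (e.map st) := by
      funext v
      rw [hconj v, hsl v, wact_neg, hslr]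
      have hrhs : wact A (e.map st) v = Pmap st (wact A e (Pmap st v)) := by
        have := wact_star hstar hAst e (Pmap st v)
        rwa [Pmap_Pmap hstar] at this
      rw [hrhs, hPneg, neg_neg]
    -- uniqueness of the quiver
    have huniq : Bf = Qs := by
      refine quiver_unique A arrS hRA' hA2 hAoff hsym Finset.univ.card Finset.univ Bf Qs
        (fun v => xiS v - 2 * (l.count v : ℤ)) (fun v => xiS (st v)) le_rfl
        (fun a b _ => ⟨Finset.mem_univ a, Finset.mem_univ b⟩)
        (fun a b _ => ⟨Finset.mem_univ a, Finset.mem_univ b⟩)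
        hBadj hQsadj hBh hQsh e' (e.map st) he' hestar hmain
    -- conclude
    have hop : opQ Bf = Tarr := by
      funext k m
      show Bf m k = Tarr k m
      rw [huniq, hTarr]
      rfl
    have := reversed_adapted arrS l hadapted
    rwa [← hBf, hop] at this
  · -- goal 2 : reducedness
    rw [hTA]
    intro l' hwl'
    have hrl : wact A l'.reverse = wact A l := by
      funext v
      have h1 : wact A l' (wact A l v) = v := by
        rw [hwl']
        exact wact_reverse_left A hA2 l v
      have h2 := congrArg (wact A l'.reverse) h1
      rw [wact_reverse_left A hA2 l'] at h2
      exact h2.symm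
    have := hreduced l'.reverse hrl
    rw [List.length_reverse] at this ⊢
    exact this
  · -- goal 3
    rw [hTA]
    exact hG3

end MainProof


/-- Let `𝐢 = lw0` be a reduced word for `w₀` adapted to the
simply-laced Dynkin quiver `Q`, and let `𝐢* = lw0.reverse`.  Then `𝐢*` is a
reduced word for `w₀` adapted to the dual quiver `Q*` (with data `T`):
it is adapted to `Q*`, it is reduced, and it represents the longest element,
i.e. it sends each `α_i` to `-α_{i*}`. -/
theorem reversed_word_adapted_to_dual {n h : ℕ} (S T : Setup n h)
    (hTarr : T.arr = dualArr S.star S.arr)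
    (hTxi : ∀ i, T.xi i = - S.xi (S.star i))
    (hadapted : AdaptedTo S.arr S.lw0)
    (hreduced : IsReduced (cartan S.arr) S.lw0) :
    AdaptedTo T.arr S.lw0.reverse ∧
    IsReduced (cartan T.arr) S.lw0.reverse ∧
    ∀ i : Fin n, wact (cartan T.arr) S.lw0.reverse (Pi.single i 1)
      = - Pi.single (S.star i) 1 := by
  exact reversed_word_adapted_to_dual' S.arr T.arr S.xi S.star S.lw0
    S.hloop S.hxi S.hstar S.hw0 hTarr hadapted hreduced

end

end CLDual
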